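/- arXiv:1607.06569 — 7 statements merged into one kernel-verified Lean document; each statement's English description precedes it below -/
import Mathlib

section
/- Let H be a real Hilbert space, f : H → ℝ ∪ {+∞} a proper lower semicontinuous function, x̄ ∈ dom f and p ∈ ∂_p f(x̄). If there exist δ, λ > 0 such that f − (1/(2λ))‖·‖² is concave on B(x̄, δ), then for all u, v ∈ B(x̄, δ) and all μ ∈ [0, 1] one has (in extended-real arithmetic) f''₋(x̄, p, μu + (1−μ)v) − (1/λ)‖μu + (1−μ)v‖² ≥ μ(f''₋(x̄, p, u) − (1/λ)‖u‖²) + (1−μ)(f''₋(x̄, p, v) − (1/λ)‖v‖²); that is, f''₋(x̄, p, ·) − (1/λ)‖·‖² is concave on B(x̄, δ). -/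
open Filter Topology Set Pointwise

noncomputable section

variable {H : Type*} [NormedAddCommGroup H] [InnerProductSpace ℝ H] [CompleteSpace H]

/-- The proximal subdifferential of `f` at `x`. -/
def proxSubdiff (f : H → EReal) (x : H) : Set H :=
  {ζ | ∃ σ > (0:ℝ), ∃ δ > (0:ℝ), ∀ y ∈ Metric.ball x δ,
    f x + (((inner ℝ ζ (y - x) : ℝ) - σ / 2 * ‖y - x‖ ^ 2 : ℝ) : EReal) ≤ f y}

/-- The second-order difference quotient `Δ₂f(x₀,p,t,u)`. -/
def Delta2 (f : H → EReal) (x₀ p : H) (t : ℝ) (u : H) : EReal :=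
  ((2 / t ^ 2 : ℝ) : EReal) * (f (x₀ + t • u) - f x₀ - ((t * (inner ℝ p u : ℝ) : ℝ) : EReal))

/-- The second-order lower Dini-directional derivative `f''₋(x₀,p,h)`. -/
def secondDini (f : H → EReal) (x₀ p h : H) : EReal :=
  Filter.liminf (fun q : ℝ × H => Delta2 f x₀ p q.1 q.2)
    ((nhdsWithin (0:ℝ) (Set.Ioi 0)) ×ˢ (nhds h))

/-- Weak sequential convergence in a Hilbert space. -/
def WeakTendsto (u : ℕ → H) (x : H) : Prop :=
  ∀ w : H, Tendsto (fun n => (inner ℝ (u n) w : ℝ)) atTop (nhds (inner ℝ x w : ℝ))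

/-- The mixed contingent cone `T_M(gph ∂_p f, (x₀,p))`. -/
def mixedTangent (f : H → EReal) (x₀ p : H) : Set (H × H) :=
  {q | ∃ (t : ℕ → ℝ) (hn zn : ℕ → H),
    (∀ n, 0 < t n) ∧ Tendsto t atTop (nhds 0) ∧
    Tendsto hn atTop (nhds q.1) ∧ WeakTendsto zn q.2 ∧
    ∀ n, p + t n • zn n ∈ proxSubdiff f (x₀ + t n • hn n)}

/-- The second-order mixed graphical derivative `D²_M f(x₀,p)(h)`. -/
def D2M (f : H → EReal) (x₀ p : H) (h : H) : Set H := {z | (h, z) ∈ mixedTangent f x₀ p}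

/-- Dual cone of a subset of `H × H`. -/
def dualConePair (S : Set (H × H)) : Set (H × H) :=
  {q | ∀ w ∈ S, (inner ℝ q.1 w.1 : ℝ) + (inner ℝ q.2 w.2 : ℝ) ≤ 0}

/-- `N_M(gph ∂_p f, (x₀,p))`, the dual cone of the mixed contingent cone. -/
def NM (f : H → EReal) (x₀ p : H) : Set (H × H) := dualConePair (mixedTangent f x₀ p)

/-- The second-order mixed proximal subdifferential `∂²_M f(x₀,p)(h)`. -/
def partial2M (f : H → EReal) (x₀ p : H) (h : H) : Set H := {z | (z, -h) ∈ NM f x₀ p}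

/-- The limiting (Mordukhovich) subdifferential of `g` at `x`. -/
def limitSubdiff (g : H → EReal) (x : H) : Set H :=
  {ζ | ∃ (xn ζn : ℕ → H), Tendsto xn atTop (nhds x) ∧
    Tendsto (fun n => g (xn n)) atTop (nhds (g x)) ∧
    WeakTendsto ζn ζ ∧ ∀ n, ζn n ∈ proxSubdiff g (xn n)}

/-- Epigraph of an `EReal`-valued function, viewed inside `H × ℝ`. -/
def epiE (g : H → EReal) : Set (H × ℝ) := {q | g q.1 ≤ (q.2 : EReal)}

/-- Weak convergence in `H × ℝ`: weak in `H`, usual in `ℝ`. -/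
def WeakTendstoPair (u : ℕ → H × ℝ) (q : H × ℝ) : Prop :=
  WeakTendsto (fun n => (u n).1) q.1 ∧ Tendsto (fun n => (u n).2) atTop (nhds q.2)

/-- Mosco convergence of a sequence of subsets of `H × ℝ` to `L`. -/
def MoscoConv (C : ℕ → Set (H × ℝ)) (L : Set (H × ℝ)) : Prop :=
  (L = {q | ∃ u : ℕ → H × ℝ, (∀ n, u n ∈ C n) ∧ Tendsto u atTop (nhds q)}) ∧
  (L = {q | ∃ (u : ℕ → H × ℝ) (φ : ℕ → ℕ), StrictMono φ ∧ (∀ n, u n ∈ C n) ∧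
      WeakTendstoPair (fun n => u (φ n)) q})

/-- `f` is twice epi-differentiable at `x₀` relative to `p` in the sense of Mosco. -/
def TwiceEpiDiff (f : H → EReal) (x₀ p : H) : Prop :=
  ∃ g : H → EReal, (∀ x, g x ≠ ⊥) ∧ (∃ x, g x ≠ ⊤) ∧
    ∀ t : ℕ → ℝ, (∀ n, 0 < t n) → Tendsto t atTop (nhds 0) →
      MoscoConv (fun n => epiE (fun u => Delta2 f x₀ p (t n) u)) (epiE g)

/-- Concavity on a set for `EReal`-valued functions. -/
def ConcaveOnE {E : Type*} [AddCommGroup E] [Module ℝ E] (s : Set E) (g : E → EReal) : Prop :=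
  ∀ u ∈ s, ∀ v ∈ s, ∀ μ : ℝ, 0 ≤ μ → μ ≤ 1 →
    ((μ : ℝ) : EReal) * g u + ((1 - μ : ℝ) : EReal) * g v ≤ g (μ • u + (1 - μ) • v)

/-- `f` is paraconcave: `f - (1/(2λ))‖·‖²` is concave for some `λ > 0`. -/
def Paraconcave (f : H → EReal) : Prop :=
  ∃ lam > (0:ℝ), ConcaveOnE Set.univ
    (fun x => f x - ((1 / (2 * lam) * ‖x‖ ^ 2 : ℝ) : EReal))

/-- The cone generated by `A - x`. -/
def coneGen {E : Type*} [AddCommGroup E] [Module ℝ E] (A : Set E) (x : E) : Set E :=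
  {y | ∃ t : ℝ, 0 ≤ t ∧ ∃ a ∈ A, y = t • (a - x)}

/-- Quasi-relative interior. -/
def qri {E : Type*} [NormedAddCommGroup E] [NormedSpace ℝ E] (A : Set E) : Set E :=
  {x ∈ A | ∃ S : Submodule ℝ E, closure (coneGen A x) = (S : Set E)}

/-- Strong quasi-relative interior. -/
def sqri {E : Type*} [NormedAddCommGroup E] [NormedSpace ℝ E] (A : Set E) : Set E :=
  {x ∈ A | ∃ S : Submodule ℝ E, IsClosed (S : Set E) ∧ coneGen A x = (S : Set E)}

/-- Second-order optimality condition of the first kind at `x₀`. -/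
def SOC1 (f : H → EReal) (x₀ : H) : Prop :=
  ∃ β > (0:ℝ), ∀ h : H, ‖h‖ = 1 → ((β : ℝ) : EReal) ≤ secondDini f x₀ 0 h

/-- Second-order optimality condition of the second kind at `x₀`. -/
def SOC2 (f : H → EReal) (x₀ : H) : Prop :=
  ∃ β > (0:ℝ), ∀ h : H, ‖h‖ = 1 → (D2M f x₀ 0 h).Nonempty →
    ∃ z ∈ D2M f x₀ 0 h, β ≤ (inner ℝ z h : ℝ)

/-- Second-order optimality condition of the third kind at `x₀`. -/
def SOC3 (f : H → EReal) (x₀ : H) : Prop :=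
  ∃ β > (0:ℝ), ∀ h : H, ‖h‖ = 1 → ∀ z ∈ partial2M f x₀ 0 h, β ≤ (inner ℝ z h : ℝ)

/-- `x₀` is a strict local minimizer of order two for `f`. -/
def StrictLocalMinOrder2 (f : H → EReal) (x₀ : H) : Prop :=
  ∃ β > (0:ℝ), ∃ δ > (0:ℝ), ∀ x ∈ Metric.ball x₀ δ,
    f x₀ + ((β / 2 * ‖x - x₀‖ ^ 2 : ℝ) : EReal) ≤ f x

/-- `f''₋(x₀,p,h) ≥ β` holds uniformly with respect to `h ∈ A`. -/
def UniformDiniGE (f : H → EReal) (x₀ p : H) (β : ℝ) (A : Set H) : Prop :=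
  ∀ ε > (0:ℝ), ∃ δ > (0:ℝ), ∀ t : ℝ, 0 < t → t < δ →
    ∀ h ∈ A + Metric.closedBall (0:H) δ, ((β - ε : ℝ) : EReal) ≤ Delta2 f x₀ p t h


/-!
Subtracting `c‖·‖²` from `f` and replacing `p` by `p - 2c x₀` shifts every second-order
difference quotient `Δ₂f(x₀, p, t, u)` by exactly `-2c‖u‖²`, so `f''₋(x₀, p, ·) - 2c‖·‖²` is the
second-order Dini derivative of `g = f - c‖·‖²`. When `g` is concave near `x₀`, each quotient
`Δ₂g(x₀, p', t, ·)` is concave as long as `x₀ + t u` stays in that neighbourhood, which for small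
`t` holds for all directions near any given one. Concavity passes to the liminf because `liminf`
is superadditive and commutes with multiplication by nonnegative scalars.
-/

namespace EReal

variable {α : Type*} {F : Filter α}

theorem liminf_sub_coe_of_tendsto [F.NeBot] (X : α → EReal) {φ : α → ℝ} {l : ℝ}
    (hφ : Tendsto φ F (𝓝 l)) :
    liminf (fun a => X a - (φ a : EReal)) F = liminf X F - (l : EReal) := by
  have hcoe : ∀ {ψ : α → ℝ} {m : ℝ}, Tendsto ψ F (𝓝 m) →
      liminf (fun a => (ψ a : EReal)) F = m := fun h =>
    ((continuous_coe_real_ereal.tendsto _).comp h).liminf_eq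
  apply le_antisymm
  · calc liminf (fun a => X a - (φ a : EReal)) F
        = liminf (fun a => X a - (φ a : EReal)) F + (l : EReal) - (l : EReal) :=
          EReal.add_sub_cancel_right.symm
      _ ≤ liminf X F - (l : EReal) := by
          refine EReal.sub_le_sub ?_ le_rfl
          calc liminf (fun a => X a - (φ a : EReal)) F + (l : EReal)
              = liminf (fun a => X a - (φ a : EReal)) F + liminf (fun a => (φ a : EReal)) F := by
                rw [hcoe hφ]
            _ ≤ liminf (fun a => X a - (φ a : EReal) + (φ a : EReal)) F := le_liminf_add
            _ = liminf X F := by simp only [EReal.sub_add_cancel]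
  · calc liminf X F - (l : EReal)
        = liminf X F + liminf (fun a => ((-φ a : ℝ) : EReal)) F := by
          rw [hcoe hφ.neg, sub_eq_add_neg, EReal.coe_neg]
      _ ≤ liminf (fun a => X a + ((-φ a : ℝ) : EReal)) F := le_liminf_add
      _ = liminf (fun a => X a - (φ a : EReal)) F := by
          simp only [EReal.coe_neg, ← sub_eq_add_neg]

theorem mul_liminf_add_mul_liminf_le [F.NeBot] {X Y Z : α → EReal} {μ ν : ℝ} (hμ : 0 ≤ μ)
    (hν : 0 ≤ ν) (h : ∀ᶠ a in F, (μ : EReal) * X a + (ν : EReal) * Y a ≤ Z a) :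
    (μ : EReal) * liminf X F + (ν : EReal) * liminf Y F ≤ liminf Z F :=
  calc (μ : EReal) * liminf X F + (ν : EReal) * liminf Y F
      = liminf (fun a => (μ : EReal) * X a) F + liminf (fun a => (ν : EReal) * Y a) F := by
        rw [liminf_const_mul_of_nonneg_of_ne_top (by exact_mod_cast hμ) (coe_ne_top μ),
          liminf_const_mul_of_nonneg_of_ne_top (by exact_mod_cast hν) (coe_ne_top ν)]
    _ ≤ liminf (fun a => (μ : EReal) * X a + (ν : EReal) * Y a) F := le_liminf_add
    _ ≤ liminf Z F := liminf_le_liminf h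

end EReal

namespace ConcaveOnE

variable {E E' : Type*} [AddCommGroup E] [Module ℝ E] [AddCommGroup E'] [Module ℝ E']
  {s : Set E} {g : E → EReal}

theorem comp_affineMap (hg : ConcaveOnE s g) (A : E' →ᵃ[ℝ] E) : ConcaveOnE (A ⁻¹' s) (g ∘ A) := by
  intro u hu v hv μ hμ0 hμ1
  simpa only [Function.comp_apply, Convex.combo_affine_apply (add_sub_cancel μ 1)]
    using hg _ hu _ hv μ hμ0 hμ1

theorem sub_affineMap (hg : ConcaveOnE s g) (L : E →ᵃ[ℝ] ℝ) :
    ConcaveOnE s (fun u => g u - (L u : EReal)) := by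
  intro u hu v hv μ hμ0 hμ1
  have hμ : (0 : EReal) ≤ μ := by exact_mod_cast hμ0
  have hν : (0 : EReal) ≤ ((1 - μ : ℝ) : EReal) := by exact_mod_cast sub_nonneg.2 hμ1
  calc (μ : EReal) * (g u - (L u : EReal)) + ((1 - μ : ℝ) : EReal) * (g v - (L v : EReal))
      = (μ : EReal) * g u + ((1 - μ : ℝ) : EReal) * g v
          - ((μ * L u + (1 - μ) * L v : ℝ) : EReal) := by
        rw [EReal.mul_sub_of_nonneg_of_ne_top hμ (EReal.coe_ne_top _),
          EReal.mul_sub_of_nonneg_of_ne_top hν (EReal.coe_ne_top _), EReal.coe_add,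
          EReal.add_sub_add_comm (.inl (EReal.coe_ne_bot _)) (.inl (EReal.coe_ne_top _)),
          EReal.coe_mul, EReal.coe_mul]
    _ ≤ g (μ • u + (1 - μ) • v) - (L (μ • u + (1 - μ) • v) : EReal) := by
        rw [Convex.combo_affine_apply (add_sub_cancel μ 1)]
        exact EReal.sub_le_sub (hg u hu v hv μ hμ0 hμ1) le_rfl

theorem const_mul (hg : ConcaveOnE s g) {k : ℝ} (hk : 0 ≤ k) :
    ConcaveOnE s (fun u => (k : EReal) * g u) := by
  intro u hu v hv μ hμ0 hμ1
  have hk' : (0 : EReal) ≤ k := by exact_mod_cast hk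
  calc (μ : EReal) * ((k : EReal) * g u) + ((1 - μ : ℝ) : EReal) * ((k : EReal) * g v)
      = (k : EReal) * ((μ : EReal) * g u + ((1 - μ : ℝ) : EReal) * g v) := by
        rw [EReal.left_distrib_of_nonneg_of_ne_top hk' (EReal.coe_ne_top k)]
        simp only [mul_left_comm (k : EReal)]
    _ ≤ (k : EReal) * g (μ • u + (1 - μ) • v) :=
        mul_le_mul_of_nonneg_left (hg u hu v hv μ hμ0 hμ1) hk'

end ConcaveOnE

section SecondOrder

variable {E : Type*} [NormedAddCommGroup E] [InnerProductSpace ℝ E]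

theorem ConcaveOnE.delta2 {s : Set E} {g : E → EReal} (hg : ConcaveOnE s g) {x₀ : E}
    (hx₀ : g x₀ ≠ ⊤) (hx₀' : g x₀ ≠ ⊥) (p : E) {t : ℝ} (ht : 0 < t) :
    ConcaveOnE ((fun u => x₀ + t • u) ⁻¹' s) (Delta2 g x₀ p t) := by
  lift g x₀ to ℝ using ⟨hx₀, hx₀'⟩ with r hr
  let A : E →ᵃ[ℝ] E := AffineMap.const ℝ E x₀ + t • AffineMap.id ℝ E
  have := (((hg.comp_affineMap A).sub_affineMap (AffineMap.const ℝ E r)).sub_affineMap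
    (t • innerₛₗ ℝ p).toAffineMap).const_mul (k := 2 / t ^ 2) (by positivity)
  convert this using 1
  · ext u; simp [A]
  · ext u; simp [A, Delta2, hr]

theorem delta2_sub_sq_norm {f : E → EReal} {x₀ : E} (hx₀ : f x₀ ≠ ⊤) (hx₀' : f x₀ ≠ ⊥)
    (p : E) (c : ℝ) {t : ℝ} (ht : 0 < t) (u : E) :
    Delta2 (fun x => f x - ((c * ‖x‖ ^ 2 : ℝ) : EReal)) x₀ (p - (2 * c) • x₀) t u =
      Delta2 f x₀ p t u - ((2 * c * ‖u‖ ^ 2 : ℝ) : EReal) := by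
  lift f x₀ to ℝ using ⟨hx₀, hx₀'⟩ with r hr
  have hk : 0 < 2 / t ^ 2 := by positivity
  simp only [Delta2, ← hr, ← EReal.coe_sub]
  induction f (x₀ + t • u) using EReal.rec with
  | bot => simp only [EReal.bot_sub, EReal.coe_mul_bot_of_pos hk]
  | top => simp only [EReal.top_sub_coe, EReal.coe_mul_top_of_pos hk]
  | coe y =>
    norm_cast
    have hnorm : ‖x₀ + t • u‖ ^ 2 = ‖x₀‖ ^ 2 + 2 * t * inner ℝ x₀ u + t ^ 2 * ‖u‖ ^ 2 := by
      rw [norm_add_sq_real, inner_smul_right, norm_smul, mul_pow, Real.norm_eq_abs, sq_abs]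
      ring
    rw [hnorm, inner_sub_left, real_inner_smul_left]
    field_simp
    ring

theorem secondDini_eq_liminf_translate (f : E → EReal) (x₀ p u w : E) :
    secondDini f x₀ p u =
      liminf (fun q : ℝ × E => Delta2 f x₀ p q.1 (q.2 + (u - w))) (𝓝[>] 0 ×ˢ 𝓝 w) := by
  have hmap : 𝓝[>] (0 : ℝ) ×ˢ 𝓝 u = map (Prod.map id (· + (u - w))) (𝓝[>] 0 ×ˢ 𝓝 w) := by
    rw [← prod_map_right, map_add_right_nhds, add_sub_cancel]
  rw [secondDini, hmap, ← liminf_comp]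
  rfl

theorem secondDini_sub_sq_norm {f : E → EReal} {x₀ : E} (hx₀ : f x₀ ≠ ⊤) (hx₀' : f x₀ ≠ ⊥)
    (p : E) (c : ℝ) (u : E) :
    secondDini (fun x => f x - ((c * ‖x‖ ^ 2 : ℝ) : EReal)) x₀ (p - (2 * c) • x₀) u =
      secondDini f x₀ p u - ((2 * c * ‖u‖ ^ 2 : ℝ) : EReal) := by
  have hpos : ∀ᶠ q : ℝ × E in 𝓝[>] 0 ×ˢ 𝓝 u, 0 < q.1 := eventually_mem_nhdsWithin.prod_inl _
  rw [secondDini, liminf_congr (hpos.mono fun q hq => delta2_sub_sq_norm hx₀ hx₀' p c hq q.2)]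
  have hquad : Continuous fun h : E => 2 * c * ‖h‖ ^ 2 := by fun_prop
  exact EReal.liminf_sub_coe_of_tendsto _ ((hquad.tendsto u).comp tendsto_snd)

theorem ConcaveOnE.secondDini_of_mem_nhds {s : Set E} {g : E → EReal} {x₀ : E} (hs : s ∈ 𝓝 x₀)
    (hg : ConcaveOnE s g) (hx₀ : g x₀ ≠ ⊤) (hx₀' : g x₀ ≠ ⊥) (p : E) :
    ConcaveOnE univ (secondDini g x₀ p) := by
  intro u _ v _ μ hμ0 hμ1
  set w := μ • u + (1 - μ) • v
  have hpos : ∀ᶠ q : ℝ × E in 𝓝[>] 0 ×ˢ 𝓝 w, 0 < q.1 := eventually_mem_nhdsWithin.prod_inl _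
  have hmem (d : E) : ∀ᶠ q : ℝ × E in 𝓝[>] 0 ×ˢ 𝓝 w, x₀ + q.1 • (q.2 + d) ∈ s := by
    have hcont : Continuous fun q : ℝ × E => x₀ + q.1 • (q.2 + d) := by fun_prop
    have hlim := hcont.tendsto (0, w)
    rw [zero_smul, add_zero, nhds_prod_eq] at hlim
    exact hlim.mono_left (prod_mono nhdsWithin_le_nhds le_rfl) hs
  rw [secondDini_eq_liminf_translate g x₀ p u w, secondDini_eq_liminf_translate g x₀ p v w]
  refine EReal.mul_liminf_add_mul_liminf_le hμ0 (sub_nonneg.2 hμ1) ?_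
  filter_upwards [hpos, hmem (u - w), hmem (v - w)] with q hq hu hv
  have hcomb : μ • (q.2 + (u - w)) + (1 - μ) • (q.2 + (v - w)) = q.2 := by
    simp only [w]
    module
  simpa only [hcomb] using hg.delta2 hx₀ hx₀' p hq _ hu _ hv μ hμ0 hμ1

end SecondOrder

theorem secondDini_paraconcave_ball_general (f : H → EReal) (hbot : ∀ x, f x ≠ ⊥)
    (x₀ : H) (hdom : f x₀ ≠ ⊤) (p : H)
    (δ lam : ℝ) (hδ : 0 < δ)
    (hconc : ConcaveOnE (Metric.ball x₀ δ)
      (fun x => f x - ((1 / (2 * lam) * ‖x‖ ^ 2 : ℝ) : EReal))) :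
    ∀ u ∈ Metric.ball x₀ δ, ∀ v ∈ Metric.ball x₀ δ, ∀ μ : ℝ, 0 ≤ μ → μ ≤ 1 →
      ((μ : ℝ) : EReal) * (secondDini f x₀ p u - ((1 / lam * ‖u‖ ^ 2 : ℝ) : EReal)) +
        ((1 - μ : ℝ) : EReal) * (secondDini f x₀ p v - ((1 / lam * ‖v‖ ^ 2 : ℝ) : EReal)) ≤
      secondDini f x₀ p (μ • u + (1 - μ) • v) -
        ((1 / lam * ‖μ • u + (1 - μ) • v‖ ^ 2 : ℝ) : EReal) := by
  intro u _ v _ μ hμ0 hμ1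
  obtain ⟨r, hr⟩ : ∃ r : ℝ, f x₀ = r := ⟨_, (EReal.coe_toReal hdom (hbot x₀)).symm⟩
  have hg₀ : f x₀ - ((1 / (2 * lam) * ‖x₀‖ ^ 2 : ℝ) : EReal) =
      ((r - 1 / (2 * lam) * ‖x₀‖ ^ 2 : ℝ) : EReal) := by
    rw [hr, EReal.coe_sub]
  have key := hconc.secondDini_of_mem_nhds (Metric.ball_mem_nhds x₀ hδ)
    (hg₀ ▸ EReal.coe_ne_top _) (hg₀ ▸ EReal.coe_ne_bot _) (p - (2 * (1 / (2 * lam))) • x₀)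
    u trivial v trivial μ hμ0 hμ1
  simp only [secondDini_sub_sq_norm hdom (hbot x₀)] at key
  rwa [show 2 * (1 / (2 * lam)) = 1 / lam by ring] at key

theorem secondDini_paraconcave_ball (f : H → EReal) (hlsc : LowerSemicontinuous f) (hbot : ∀ x, f x ≠ ⊥)
    (hproper : ∃ x, f x ≠ ⊤) (x₀ : H) (hdom : f x₀ ≠ ⊤) (p : H) (hp : p ∈ proxSubdiff f x₀)
    (δ lam : ℝ) (hδ : 0 < δ) (hlam : 0 < lam)
    (hconc : ConcaveOnE (Metric.ball x₀ δ)
      (fun x => f x - ((1 / (2 * lam) * ‖x‖ ^ 2 : ℝ) : EReal))) :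
    ∀ u ∈ Metric.ball x₀ δ, ∀ v ∈ Metric.ball x₀ δ, ∀ μ : ℝ, 0 ≤ μ → μ ≤ 1 →
      ((μ : ℝ) : EReal) * (secondDini f x₀ p u - ((1 / lam * ‖u‖ ^ 2 : ℝ) : EReal)) +
        ((1 - μ : ℝ) : EReal) * (secondDini f x₀ p v - ((1 / lam * ‖v‖ ^ 2 : ℝ) : EReal)) ≤
      secondDini f x₀ p (μ • u + (1 - μ) • v) -
        ((1 / lam * ‖μ • u + (1 - μ) • v‖ ^ 2 : ℝ) : EReal) :=
  secondDini_paraconcave_ball_general f hbot x₀ hdom p δ lam hδ hconc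
end
end

section
/- Let H be a real Hilbert space, f : H → ℝ ∪ {+∞} a proper lower semicontinuous function, x̄ ∈ dom f and p ∈ ∂_p f(x̄). If there exists λ > 0 such that f − (1/(2λ))‖·‖² is concave on H, then f''₋(x̄, p, ·) − (1/λ)‖·‖² is concave on H: for all u, v ∈ H and μ ∈ [0, 1], f''₋(x̄, p, μu + (1−μ)v) − (1/λ)‖μu + (1−μ)v‖² ≥ μ(f''₋(x̄, p, u) − (1/λ)‖u‖²) + (1−μ)(f''₋(x̄, p, v) − (1/λ)‖v‖²) in extended-real arithmetic. -/
open Filter Topology Set Pointwise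

noncomputable section

variable {H : Type*} [NormedAddCommGroup H] [InnerProductSpace ℝ H] [CompleteSpace H]

/-! For fixed `t > 0`, `h ↦ Δ₂f(x₀, p, t, h) - ‖h‖²/λ` differs by an affine function from
`2/t²` times the concave function `f - ‖·‖²/(2λ)` evaluated at `x₀ + t • h`, so it is concave.
Concavity survives the lower limit as `(t, h) → (0⁺, w)`: translating `h` moves the base point
`w` to `u` and `v`, and the liminf of a sum dominates the sum of the liminfs. The quadratic term
is continuous, so it passes through the liminf. -/

namespace EReal

theorem coe_mul_sub_sub_sub_eq {K a b c d e : ℝ} (hK : 0 < K)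
    (h : K * (a + b) + c = K * d - e) (X : EReal) :
    (K : EReal) * (X - a - b) - c = K * (X - d) + e := by
  induction X with
  | bot => simp [coe_mul_bot_of_pos hK]
  | top => simp [coe_mul_top_of_pos hK]
  | coe x => norm_cast; linear_combination -h

theorem liminf_sub_of_tendsto_coe {α : Type*} {F : Filter α} [F.NeBot] {u : α → EReal}
    {v : α → ℝ} {c : ℝ} (hv : Tendsto v F (𝓝 c)) :
    liminf (fun x => u x - v x) F = liminf u F - c := by
  have hv' : Tendsto (fun x => ((-v x : ℝ) : EReal)) F (𝓝 ((-c : ℝ) : EReal)) :=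
    (continuous_coe_real_ereal.tendsto _).comp hv.neg
  have hsub : (fun x => u x - v x) = u + fun x => ((-v x : ℝ) : EReal) := by
    funext x; simp [sub_eq_add_neg]
  rw [hsub, sub_eq_add_neg, ← coe_neg]
  apply le_antisymm
  · rw [add_comm u, add_comm _ ((-c : ℝ) : EReal), ← hv'.limsup_eq]
    exact liminf_add_le (.inl (hv'.limsup_eq ▸ coe_ne_bot _))
      (.inl (hv'.limsup_eq ▸ coe_ne_top _))
  · rw [← hv'.liminf_eq]
    exact le_liminf_add

end EReal

section ConcaveOnE

variable {E F : Type*} [AddCommGroup E] [Module ℝ E] [AddCommGroup F] [Module ℝ F]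

theorem ConcaveOnE.comp_affineMap_s2 {g : F → EReal} (hg : ConcaveOnE univ g) (A : E →ᵃ[ℝ] F) :
    ConcaveOnE univ (g ∘ A) := by
  intro u _ v _ μ hμ0 hμ1
  simpa only [Function.comp_apply, Convex.combo_affine_apply (add_sub_cancel μ 1)]
    using hg (A u) trivial (A v) trivial μ hμ0 hμ1

theorem ConcaveOnE.const_mul_s2 {s : Set E} {g : E → EReal} (hg : ConcaveOnE s g) {K : ℝ}
    (hK : 0 ≤ K) : ConcaveOnE s (fun x => (K : EReal) * g x) := by
  intro u hu v hv μ hμ0 hμ1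
  rw [mul_left_comm _ (K : EReal), mul_left_comm _ (K : EReal),
    ← EReal.left_distrib_of_nonneg_of_ne_top (by exact_mod_cast hK) (EReal.coe_ne_top K)]
  exact mul_le_mul_of_nonneg_left (hg u hu v hv μ hμ0 hμ1) (by exact_mod_cast hK)

theorem ConcaveOnE.add_affineMap {g : E → EReal} (hg : ConcaveOnE univ g) (a : E →ᵃ[ℝ] ℝ) :
    ConcaveOnE univ (fun x => g x + (a x : EReal)) := by
  intro u _ v _ μ hμ0 hμ1
  dsimp only
  have hν : (0 : EReal) ≤ ((1 - μ : ℝ) : EReal) := by exact_mod_cast sub_nonneg.2 hμ1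
  rw [EReal.left_distrib_of_nonneg_of_ne_top (by exact_mod_cast hμ0) (EReal.coe_ne_top μ),
    EReal.left_distrib_of_nonneg_of_ne_top hν (EReal.coe_ne_top _), add_add_add_comm,
    Convex.combo_affine_apply (add_sub_cancel μ 1)]
  exact add_le_add (hg u trivial v trivial μ hμ0 hμ1) (by simp)

theorem ConcaveOnE.liminf_prod_nhds [TopologicalSpace E] [IsTopologicalAddGroup E] {T : Type*}
    {L : Filter T} [L.NeBot] {g : T → E → EReal} (hg : ∀ᶠ t in L, ConcaveOnE univ (g t)) :
    ConcaveOnE univ (fun w => liminf (fun q : T × E => g q.1 q.2) (L ×ˢ 𝓝 w)) := by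
  intro u _ v _ μ hμ0 hμ1
  dsimp only
  set w := μ • u + (1 - μ) • v
  have shift : ∀ z, liminf (fun q : T × E => g q.1 (q.2 + (z - w))) (L ×ˢ 𝓝 w)
      = liminf (fun q : T × E => g q.1 q.2) (L ×ˢ 𝓝 z) := by
    intro z
    have hmap : map (Prod.map id (· + (z - w))) (L ×ˢ 𝓝 w) = L ×ˢ 𝓝 z := by
      rw [← prod_map_map_eq', map_id, map_add_right_nhds, add_sub_cancel]
    rw [← hmap, ← liminf_comp]
    rfl
  have hcombo : ∀ h : E, μ • (h + (u - w)) + (1 - μ) • (h + (v - w)) = h := fun h => by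
    simp only [w]; module
  have hν0 : (0 : EReal) ≤ ((1 - μ : ℝ) : EReal) := by exact_mod_cast sub_nonneg.2 hμ1
  rw [← shift u, ← shift v,
    ← EReal.liminf_const_mul_of_nonneg_of_ne_top (by exact_mod_cast hμ0) (EReal.coe_ne_top μ),
    ← EReal.liminf_const_mul_of_nonneg_of_ne_top hν0 (EReal.coe_ne_top _)]
  refine EReal.le_liminf_add.trans (liminf_le_liminf ?_)
  filter_upwards [hg.prod_inl (𝓝 w)] with q hq
  have := hq (q.2 + (u - w)) trivial (q.2 + (v - w)) trivial μ hμ0 hμ1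
  rwa [hcombo] at this

end ConcaveOnE

section DifferenceQuotient

variable {E : Type*} [NormedAddCommGroup E] [InnerProductSpace ℝ E]

theorem concaveOnE_delta2_sub_sq {f : E → EReal} {x₀ : E} (hbot : f x₀ ≠ ⊥) (htop : f x₀ ≠ ⊤)
    (p : E) {lam : ℝ}
    (hconc : ConcaveOnE univ (fun x => f x - ((1 / (2 * lam) * ‖x‖ ^ 2 : ℝ) : EReal)))
    {t : ℝ} (ht : 0 < t) :
    ConcaveOnE univ (fun h => Delta2 f x₀ p t h - ((1 / lam * ‖h‖ ^ 2 : ℝ) : EReal)) := by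
  set s := (f x₀).toReal
  have hs : f x₀ = s := (EReal.coe_toReal htop hbot).symm
  have hK : 0 < 2 / t ^ 2 := by positivity
  let A : E →ᵃ[ℝ] E := (t • LinearMap.id : E →ₗ[ℝ] E).toAffineMap + AffineMap.const ℝ E x₀
  -- the affine part `⟪z, h⟫ + c` comes from expanding `‖x₀ + t • h‖²`
  let z : E := (2 / t) • (lam⁻¹ • x₀ - p)
  let c : ℝ := 2 / t ^ 2 * ((2 * lam)⁻¹ * ‖x₀‖ ^ 2 - s)
  let a : E →ᵃ[ℝ] ℝ := (innerₛₗ ℝ z).toAffineMap + AffineMap.const ℝ E c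
  convert ((hconc.comp_affineMap_s2 A).const_mul_s2 hK.le).add_affineMap a using 2 with h
  have hA : A h = x₀ + t • h := by simp [A, add_comm]
  have ha : a h = inner ℝ z h + c := by simp [a]
  simp only [Delta2, hs, Function.comp_apply, hA, ha]
  refine EReal.coe_mul_sub_sub_sub_eq hK ?_ _
  rw [norm_add_sq_real, norm_smul, real_inner_smul_right, Real.norm_of_nonneg ht.le]
  simp only [z, c, real_inner_smul_left, inner_sub_left]
  field_simp
  ring

end DifferenceQuotient

theorem secondDini_paraconcave_general (f : H → EReal) (hbot : ∀ x, f x ≠ ⊥)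
    (x₀ : H) (hdom : f x₀ ≠ ⊤) (p : H) (lam : ℝ)
    (hconc : ConcaveOnE Set.univ
      (fun x => f x - ((1 / (2 * lam) * ‖x‖ ^ 2 : ℝ) : EReal))) :
    ∀ (u v : H), ∀ μ : ℝ, 0 ≤ μ → μ ≤ 1 →
      ((μ : ℝ) : EReal) * (secondDini f x₀ p u - ((1 / lam * ‖u‖ ^ 2 : ℝ) : EReal)) +
        ((1 - μ : ℝ) : EReal) * (secondDini f x₀ p v - ((1 / lam * ‖v‖ ^ 2 : ℝ) : EReal)) ≤
      secondDini f x₀ p (μ • u + (1 - μ) • v) -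
        ((1 / lam * ‖μ • u + (1 - μ) • v‖ ^ 2 : ℝ) : EReal) := by
  have hquot : ∀ᶠ t in 𝓝[>] (0 : ℝ),
      ConcaveOnE univ (fun h => Delta2 f x₀ p t h - ((1 / lam * ‖h‖ ^ 2 : ℝ) : EReal)) :=
    eventually_mem_nhdsWithin.mono fun t ht =>
      concaveOnE_delta2_sub_sq (hbot x₀) hdom p hconc ht
  have hliminf : ∀ w : H, liminf (fun q : ℝ × H =>
      Delta2 f x₀ p q.1 q.2 - ((1 / lam * ‖q.2‖ ^ 2 : ℝ) : EReal)) (𝓝[>] 0 ×ˢ 𝓝 w)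
      = secondDini f x₀ p w - ((1 / lam * ‖w‖ ^ 2 : ℝ) : EReal) := fun w =>
    EReal.liminf_sub_of_tendsto_coe
      (((continuous_const.mul (continuous_norm.pow 2)).tendsto w).comp tendsto_snd)
  intro u v μ hμ0 hμ1
  simpa only [hliminf] using ConcaveOnE.liminf_prod_nhds hquot u trivial v trivial μ hμ0 hμ1

theorem secondDini_paraconcave (f : H → EReal) (hlsc : LowerSemicontinuous f) (hbot : ∀ x, f x ≠ ⊥)
    (hproper : ∃ x, f x ≠ ⊤) (x₀ : H) (hdom : f x₀ ≠ ⊤) (p : H) (hp : p ∈ proxSubdiff f x₀)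
    (lam : ℝ) (hlam : 0 < lam)
    (hconc : ConcaveOnE Set.univ
      (fun x => f x - ((1 / (2 * lam) * ‖x‖ ^ 2 : ℝ) : EReal))) :
    ∀ (u v : H), ∀ μ : ℝ, 0 ≤ μ → μ ≤ 1 →
      ((μ : ℝ) : EReal) * (secondDini f x₀ p u - ((1 / lam * ‖u‖ ^ 2 : ℝ) : EReal)) +
        ((1 - μ : ℝ) : EReal) * (secondDini f x₀ p v - ((1 / lam * ‖v‖ ^ 2 : ℝ) : EReal)) ≤
      secondDini f x₀ p (μ • u + (1 - μ) • v) -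
        ((1 / lam * ‖μ • u + (1 - μ) • v‖ ^ 2 : ℝ) : EReal) :=
  secondDini_paraconcave_general f hbot x₀ hdom p lam hconc
end
end

section
/- Let H be a real Hilbert space, f : H → ℝ ∪ {+∞} a proper lower semicontinuous function, x̄ ∈ dom f and p ∈ ∂_p f(x̄). For every (h, r) ∈ epi(½f''₋(x̄, p, ·)) there exist sequences t_k → 0⁺ and (h_k, r_k) → (h, r) in norm with (h_k, r_k) ∈ epi(½Δ₂f(x̄, p, t_k, ·)) for all k; that is, epi(½f''₋(x̄, p, ·)) ⊆ limsup_{t→0⁺} epi(½Δ₂f(x̄, p, t, ·)). -/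
open Filter Topology Set Pointwise

noncomputable section

variable {H : Type*} [NormedAddCommGroup H] [InnerProductSpace ℝ H] [CompleteSpace H]

/- The inclusion is a pure liminf statement: `f''₋(x₀, p, h) ≤ 2r` means that for every `k` the
quotient `Δ₂f(x₀, p, t, h')` drops below `2(r + 1/(k+1))` at points `(t, h')` arbitrarily close to
`(0⁺, h)`; a diagonal choice along a countable basis of that filter gives the sequences, with
`r_k = r + 1/(k+1)`. -/

theorem EReal.half_mul_le_coe_iff {a : EReal} {c : ℝ} :
    ((1 / 2 : ℝ) : EReal) * a ≤ c ↔ a ≤ ((2 * c : ℝ) : EReal) := by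
  induction a using EReal.rec with
  | bot => simp only [EReal.mul_bot_of_pos (by norm_num : (0 : EReal) < ((1 / 2 : ℝ) : EReal)),
      bot_le]
  | coe a =>
    rw [← EReal.coe_mul, EReal.coe_le_coe_iff, EReal.coe_le_coe_iff]
    constructor <;> intro h <;> linarith
  | top =>
    rw [EReal.mul_top_of_pos (by norm_num : (0 : EReal) < ((1 / 2 : ℝ) : EReal)), top_le_iff,
      top_le_iff]
    exact iff_of_false (EReal.coe_ne_top _) (EReal.coe_ne_top _)

theorem Filter.exists_seq_forall_of_forall_frequently {ι : Type*} {l : Filter ι}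
    [l.IsCountablyGenerated] {p : ℕ → ι → Prop} (h : ∀ k, ∃ᶠ x in l, p k x) :
    ∃ x : ℕ → ι, Tendsto x atTop l ∧ ∀ k, p k (x k) := by
  obtain ⟨s, hs⟩ := l.exists_antitone_basis
  choose x hxs hxp using fun k => ((h k).and_eventually (hs.mem k)).exists.imp fun _ => And.symm
  exact ⟨x, hs.tendsto hxs, hxp⟩

theorem Filter.exists_seq_mem_lt_of_liminf_lt {ι β : Type*} [CompleteLinearOrder β]
    {l : Filter ι} [l.IsCountablyGenerated] {φ : ι → β} {s : Set ι} (hs : s ∈ l) {b : ℕ → β}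
    (hb : ∀ k, liminf φ l < b k) :
    ∃ x : ℕ → ι, Tendsto x atTop l ∧ ∀ k, x k ∈ s ∧ φ (x k) < b k :=
  exists_seq_forall_of_forall_frequently fun k =>
    (frequently_lt_of_liminf_lt (h := hb k)).and_eventually hs |>.mono fun _ hx => hx.symm

theorem epi_secondDini_subset_limsup_epi_general (f : H → EReal) (x₀ : H) (p : H) :
    ∀ (h : H) (r : ℝ), (h, r) ∈ epiE (fun u => ((1 / 2 : ℝ) : EReal) * secondDini f x₀ p u) →
      ∃ (t : ℕ → ℝ) (hk : ℕ → H) (rk : ℕ → ℝ), (∀ k, 0 < t k) ∧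
        Tendsto t atTop (nhds (0:ℝ)) ∧ Tendsto hk atTop (nhds h) ∧
        Tendsto rk atTop (nhds r) ∧
        ∀ k, (hk k, rk k) ∈ epiE (fun u => ((1 / 2 : ℝ) : EReal) * Delta2 f x₀ p (t k) u) := by
  intro h r hr
  set rk : ℕ → ℝ := fun k => r + 1 / ((k : ℝ) + 1)
  have hlt : ∀ k, secondDini f x₀ p h < ((2 * rk k : ℝ) : EReal) := fun k =>
    (EReal.half_mul_le_coe_iff.mp hr).trans_lt <| EReal.coe_lt_coe_iff.mpr <| by
      simp only [rk]; linarith [Nat.one_div_pos_of_nat (α := ℝ) (n := k)]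
  obtain ⟨q, hq, hqk⟩ := exists_seq_mem_lt_of_liminf_lt
    (prod_mem_prod self_mem_nhdsWithin univ_mem : Ioi (0 : ℝ) ×ˢ univ ∈ 𝓝[>] 0 ×ˢ 𝓝 h) hlt
  obtain ⟨ht, hh⟩ := tendsto_prod_iff'.mp hq
  have hrk : Tendsto rk atTop (𝓝 r) := by
    simpa [rk] using (tendsto_const_nhds (x := r)).add
      (tendsto_one_div_add_atTop_nhds_zero_nat (𝕜 := ℝ))
  exact ⟨fun k => (q k).1, fun k => (q k).2, rk, fun k => (hqk k).1.1,
    ht.mono_right nhdsWithin_le_nhds, hh, hrk, fun k => EReal.half_mul_le_coe_iff.mpr (hqk k).2.le⟩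

theorem epi_secondDini_subset_limsup_epi (f : H → EReal) (hlsc : LowerSemicontinuous f) (hbot : ∀ x, f x ≠ ⊥)
    (hproper : ∃ x, f x ≠ ⊤) (x₀ : H) (hdom : f x₀ ≠ ⊤) (p : H) (hp : p ∈ proxSubdiff f x₀) :
    ∀ (h : H) (r : ℝ), (h, r) ∈ epiE (fun u => ((1 / 2 : ℝ) : EReal) * secondDini f x₀ p u) →
      ∃ (t : ℕ → ℝ) (hk : ℕ → H) (rk : ℕ → ℝ), (∀ k, 0 < t k) ∧
        Tendsto t atTop (nhds (0:ℝ)) ∧ Tendsto hk atTop (nhds h) ∧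
        Tendsto rk atTop (nhds r) ∧
        ∀ k, (hk k, rk k) ∈ epiE (fun u => ((1 / 2 : ℝ) : EReal) * Delta2 f x₀ p (t k) u) :=
  epi_secondDini_subset_limsup_epi_general f x₀ p
end
end

section
/- Let H be a real Hilbert space, f : H → ℝ ∪ {+∞} a proper lower semicontinuous paraconcave function, x̄ ∈ dom f with 0 ∈ ∂_p f(x̄). Suppose f is continuous at x̄ and twice epi-differentiable at x̄ relative to 0 in the sense of Mosco. If f satisfies the second-order optimality condition of the first kind at x̄, then f satisfies the second-order optimality condition of the second kind at x̄. -/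
open Filter Topology Set Pointwise

noncomputable section

variable {H : Type*} [NormedAddCommGroup H] [InnerProductSpace ℝ H] [CompleteSpace H]

/-! Paraconcavity makes `f` finite and turns every proximal subgradient into a global one, up to
the quadratic `c‖·‖²`. For the quotients `Δ₂(t, ·) := Δ₂f(x̄, 0, t, ·)` this gives, uniformly in
`t`, a quadratic upper bound through every point of `gph ∂_p f` and a midpoint semiconcavity
inequality. If `tₙ zₙ ∈ ∂_p f(x̄ + tₙ hₙ)` with `hₙ → h` and `zₙ ⇀ z`, the upper bound gives
`Δ₂(tₙ, hₙ + ηh) ≤ Δ₂(tₙ, hₙ) + 2η⟨zₙ, h⟩ + O(η²)`, and rescaling `t` by `1 + η` bounds the left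
side below by `(1 + η)² f''₋(x̄, 0, h) - o(1)`. On the right, a Mosco recovery sequence `uₙ → h`
with `Δ₂(tₙ, uₙ) ≲ f''₋(x̄, 0, h)` and semiconcavity at the midpoint `uₙ` of `hₙ` and
`2uₙ - hₙ` give `Δ₂(tₙ, hₙ) ≲ f''₋(x̄, 0, h)`. Letting `n → ∞` and `η → 0` yields
`f''₋(x̄, 0, h) ≤ ⟨z, h⟩` for every `z ∈ D²_M f(x̄, 0)(h)`, so the second condition holds with the
same `β` as the first. -/

open scoped RealInnerProductSpace

section ConcaveOnE

variable {E : Type*} [AddCommGroup E] [Module ℝ E]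

theorem ConcaveOnE.ne_top {g : E → EReal} (hg : ConcaveOnE univ g) (hbot : ∀ x, g x ≠ ⊥)
    {x₀ : E} (hx₀ : g x₀ ≠ ⊤) (u : E) : g u ≠ ⊤ := by
  intro hu
  have hmid := hg u trivial ((2:ℝ) • x₀ - u) trivial (1/2) (by norm_num) (by norm_num)
  have hfin : ((1 - 1/2 : ℝ) : EReal) * g ((2:ℝ) • x₀ - u) ≠ ⊥ := by
    rw [Ne, EReal.mul_eq_bot]
    norm_num [hbot]
  rw [show (1/2:ℝ) • u + (1 - 1/2 : ℝ) • ((2:ℝ) • x₀ - u) = x₀ by module, hu,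
    EReal.mul_top_of_pos (by norm_num), EReal.top_add_of_ne_bot hfin, top_le_iff] at hmid
  exact hx₀ hmid

theorem ConcaveOnE.concaveOn_of_coe {ψ : E → ℝ} (hψ : ConcaveOnE univ (fun x => (ψ x : EReal))) :
    ConcaveOn ℝ univ ψ := by
  refine ⟨convex_univ, fun x _ y _ a b ha hb hab => ?_⟩
  obtain rfl : b = 1 - a := by linarith
  simpa only [smul_eq_mul, ← EReal.coe_mul, ← EReal.coe_add, EReal.coe_le_coe_iff]
    using hψ x trivial y trivial a ha (by linarith)

end ConcaveOnE

section InnerProductSpace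

variable {E : Type*} [NormedAddCommGroup E] [InnerProductSpace ℝ E]

theorem exists_eq_coe_of_paraconcave {f : E → EReal} (hbot : ∀ x, f x ≠ ⊥) {x₀ : E}
    (hx₀ : f x₀ ≠ ⊤) (hf : Paraconcave f) :
    ∃ (φ : E → ℝ) (c : ℝ), f = (fun x => (φ x : EReal)) ∧
      ConcaveOn ℝ univ (fun x => φ x - c * ‖x‖ ^ 2) := by
  obtain ⟨lam, -, hconc⟩ := hf
  have hfin : ∀ u, f u ≠ ⊤ := by
    intro u hu
    refine hconc.ne_top (fun x => ?_) (x₀ := x₀) ?_ u (by simp only [hu, EReal.top_sub_coe])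
    · rw [sub_eq_add_neg, ← EReal.coe_neg, Ne, EReal.add_eq_bot_iff]
      exact not_or.2 ⟨hbot x, EReal.coe_ne_bot _⟩
    · rw [sub_eq_add_neg, ← EReal.coe_neg]
      exact (EReal.add_lt_top hx₀ (EReal.coe_ne_top _)).ne
  have hf : f = fun x => ((f x).toReal : EReal) :=
    funext fun x => (EReal.coe_toReal (hfin x) (hbot x)).symm
  refine ⟨fun x => (f x).toReal, 1 / (2 * lam), hf, ?_⟩
  rw [hf] at hconc
  simp only [← EReal.coe_sub] at hconc
  exact hconc.concaveOn_of_coe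

theorem ConcaveOn.le_add_inner_of_forall_ball {Γ : E → ℝ} (hΓ : ConcaveOn ℝ univ Γ) {x ξ : E}
    {C δ : ℝ} (hδ : 0 < δ)
    (hloc : ∀ y ∈ Metric.ball x δ, Γ x + ⟪ξ, y - x⟫ - C * ‖y - x‖ ^ 2 ≤ Γ y) (u : E) :
    Γ u ≤ Γ x + ⟪ξ, u - x⟫ := by
  -- midpoint concavity turns the lower bound at `x - y` into an upper bound at `x + y`
  have hlocal : ∀ y : E, ‖y‖ < δ → Γ (x + y) ≤ Γ x + ⟪ξ, y⟫ + C * ‖y‖ ^ 2 := by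
    intro y hy
    have hmid := hΓ.2 (mem_univ (x + y)) (mem_univ (x - y)) (by norm_num : (0:ℝ) ≤ 1/2)
      (by norm_num : (0:ℝ) ≤ 1/2) (by norm_num)
    rw [show (1/2:ℝ) • (x + y) + (1/2:ℝ) • (x - y) = x by module, smul_eq_mul, smul_eq_mul]
      at hmid
    have hlow := hloc (x - y) (by simpa [dist_eq_norm] using hy)
    rw [sub_sub_cancel_left, inner_neg_right, norm_neg] at hlow
    linarith
  set d := u - x
  have hchord : ∀ μ ∈ Ioo (0:ℝ) (min 1 (δ / (‖d‖ + 1))),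
      Γ u - (Γ x + ⟪ξ, d⟫) ≤ C * ‖d‖ ^ 2 * μ := by
    rintro μ ⟨hμ0, hμ⟩
    have hμ1 : μ ≤ 1 := (hμ.trans_le (min_le_left _ _)).le
    have hμd : ‖μ • d‖ < δ := by
      have := hμ.trans_le (min_le_right _ _)
      rw [lt_div_iff₀ (by positivity)] at this
      rw [norm_smul, Real.norm_of_nonneg hμ0.le]
      nlinarith [norm_nonneg d]
    have hconv := hΓ.2 (mem_univ u) (mem_univ x) hμ0.le (sub_nonneg.2 hμ1) (add_sub_cancel μ 1)
    rw [show μ • u + (1 - μ) • x = x + μ • d by module, smul_eq_mul, smul_eq_mul] at hconv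
    have hup := hlocal _ hμd
    rw [real_inner_smul_right, norm_smul, Real.norm_of_nonneg hμ0.le] at hup
    refine le_of_mul_le_mul_left ?_ hμ0
    nlinarith
  have htend : Tendsto (fun μ => C * ‖d‖ ^ 2 * μ) (𝓝[>] 0) (𝓝 0) := by
    simpa using ((continuous_const_mul (C * ‖d‖ ^ 2)).tendsto 0).mono_left nhdsWithin_le_nhds
  exact sub_nonpos.1 <| ge_of_tendsto htend <|
    eventually_of_mem (Ioo_mem_nhdsGT (by positivity)) hchord

theorem le_add_inner_of_mem_proxSubdiff {φ : E → ℝ} {c : ℝ}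
    (hφ : ConcaveOn ℝ univ (fun x => φ x - c * ‖x‖ ^ 2)) {x ζ : E}
    (hζ : ζ ∈ proxSubdiff (fun x => (φ x : EReal)) x) (u : E) :
    φ u ≤ φ x + ⟪ζ, u - x⟫ + c * ‖u - x‖ ^ 2 := by
  obtain ⟨σ, -, δ, hδ, hball⟩ := hζ
  have hsq : ∀ y, ‖y‖ ^ 2 = ‖x‖ ^ 2 + 2 * ⟪x, y - x⟫ + ‖y - x‖ ^ 2 := fun y => by
    simpa using norm_add_sq_real x (y - x)
  -- `ζ - 2c x` is a local proximal subgradient of the concave function `φ - c‖·‖²`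
  have key := hφ.le_add_inner_of_forall_ball (x := x) (ξ := ζ - (2 * c) • x) (C := σ / 2 + c) hδ
    (fun y hy => ?_) u
  · rw [inner_sub_left, real_inner_smul_left, hsq u] at key
    linarith
  · have hb := hball y hy
    rw [← EReal.coe_add, EReal.coe_le_coe_iff] at hb
    rw [inner_sub_left, real_inner_smul_left, hsq y]
    linarith

theorem add_le_of_concaveOn_sub_sq {φ : E → ℝ} {c : ℝ}
    (hφ : ConcaveOn ℝ univ (fun x => φ x - c * ‖x‖ ^ 2)) (a b : E) :
    φ a + φ b ≤ 2 * φ ((1/2:ℝ) • (a + b)) + c / 2 * ‖a - b‖ ^ 2 := by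
  have hmid : 1/2 * (φ a - c * ‖a‖ ^ 2) + 1/2 * (φ b - c * ‖b‖ ^ 2) ≤
      φ ((1/2:ℝ) • (a + b)) - c * ‖(1/2:ℝ) • (a + b)‖ ^ 2 := by
    simpa only [smul_eq_mul, smul_add] using hφ.2 (mem_univ a) (mem_univ b)
      (by norm_num : (0:ℝ) ≤ 1/2) (by norm_num : (0:ℝ) ≤ 1/2) (by norm_num)
  rw [norm_smul, Real.norm_of_nonneg (by norm_num)] at hmid
  linear_combination 2 * hmid - c / 2 * parallelogram_law_with_norm ℝ a b

/-- The quotient `Δ₂φ(x₀, 0, t, u)` of a real-valued function. -/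
def delta2Real (φ : E → ℝ) (x₀ : E) (t : ℝ) (u : E) : ℝ :=
  2 / t ^ 2 * (φ (x₀ + t • u) - φ x₀)

theorem Delta2_coe_zero (φ : E → ℝ) (x₀ : E) (t : ℝ) (u : E) :
    Delta2 (fun x => (φ x : EReal)) x₀ 0 t u = delta2Real φ x₀ t u := by
  simp only [Delta2, delta2Real, inner_zero_left, mul_zero, EReal.coe_zero, sub_zero,
    ← EReal.coe_sub, ← EReal.coe_mul]

theorem delta2Real_eq_smul (φ : E → ℝ) (x₀ : E) {s : ℝ} (hs : s ≠ 0) (t : ℝ) (u : E) :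
    delta2Real φ x₀ t u = s ^ 2 * delta2Real φ x₀ (s * t) (s⁻¹ • u) := by
  rw [delta2Real, delta2Real, smul_smul, mul_comm s t, mul_assoc, mul_inv_cancel₀ hs, mul_one]
  field_simp

section Semiconcave

variable {φ : E → ℝ} {c : ℝ} {x₀ : E}

theorem delta2Real_le_add_inner (hφ : ConcaveOn ℝ univ (fun x => φ x - c * ‖x‖ ^ 2)) {t : ℝ}
    (ht : t ≠ 0) {v z : E} (hz : t • z ∈ proxSubdiff (fun x => (φ x : EReal)) (x₀ + t • v))
    (w : E) :
    delta2Real φ x₀ t w ≤ delta2Real φ x₀ t v + 2 * ⟪z, w - v⟫ + 2 * c * ‖w - v‖ ^ 2 := by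
  have hle := le_add_inner_of_mem_proxSubdiff hφ hz (x₀ + t • w)
  rw [show x₀ + t • w - (x₀ + t • v) = t • (w - v) by module, real_inner_smul_left,
    real_inner_smul_right, norm_smul, mul_pow, Real.norm_eq_abs, sq_abs] at hle
  calc delta2Real φ x₀ t w
      ≤ 2 / t ^ 2 * (φ (x₀ + t • v) - φ x₀ + t ^ 2 * (⟪z, w - v⟫ + c * ‖w - v‖ ^ 2)) := by
        unfold delta2Real
        gcongr
        linarith
    _ = _ := by
        unfold delta2Real
        field_simp
        ring

theorem delta2Real_add_le (hφ : ConcaveOn ℝ univ (fun x => φ x - c * ‖x‖ ^ 2)) {t : ℝ}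
    (ht : t ≠ 0) (u v : E) :
    delta2Real φ x₀ t v + delta2Real φ x₀ t ((2:ℝ) • u - v) ≤
      2 * delta2Real φ x₀ t u + 4 * c * ‖v - u‖ ^ 2 := by
  have hmid := add_le_of_concaveOn_sub_sq hφ (x₀ + t • v) (x₀ + t • ((2:ℝ) • u - v))
  rw [show (1/2:ℝ) • (x₀ + t • v + (x₀ + t • ((2:ℝ) • u - v))) = x₀ + t • u by module,
    show x₀ + t • v - (x₀ + t • ((2:ℝ) • u - v)) = (2 * t) • (v - u) by module,
    norm_smul, mul_pow, Real.norm_eq_abs, sq_abs] at hmid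
  unfold delta2Real
  calc 2 / t ^ 2 * (φ (x₀ + t • v) - φ x₀) + 2 / t ^ 2 * (φ (x₀ + t • ((2:ℝ) • u - v)) - φ x₀)
      ≤ 2 / t ^ 2 * (2 * (φ (x₀ + t • u) - φ x₀) + c / 2 * ((2 * t) ^ 2 * ‖v - u‖ ^ 2)) := by
        rw [← mul_add]
        exact mul_le_mul_of_nonneg_left (by linarith) (by positivity)
    _ = _ := by
        field_simp
        ring

end Semiconcave

section SecondDini

variable {f : E → EReal} {x₀ p h : E}

theorem eventually_lt_Delta2 {a : EReal} (ha : a < secondDini f x₀ p h) {τ : ℕ → ℝ}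
    {w : ℕ → E} (hτ : Tendsto τ atTop (𝓝[>] 0)) (hw : Tendsto w atTop (𝓝 h)) :
    ∀ᶠ n in atTop, a < Delta2 f x₀ p (τ n) (w n) :=
  (hτ.prodMk hw).eventually (eventually_lt_of_lt_liminf ha)

theorem secondDini_le_of_forall_Delta2_le {B : EReal} (hB : ∀ t > 0, Delta2 f x₀ p t h ≤ B) :
    secondDini f x₀ p h ≤ B :=
  liminf_le_of_frequently_le' <| (tendsto_id.prodMk (tendsto_const_nhds (x := h))).frequently
    (eventually_nhdsWithin_of_forall (s := Ioi (0:ℝ)) hB).frequently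

theorem TwiceEpiDiff.exists_tendsto_eventually_Delta2_lt (hf : TwiceEpiDiff f x₀ p) {r : ℝ}
    (hr : secondDini f x₀ p h < r) {t : ℕ → ℝ} (ht : ∀ n, 0 < t n)
    (ht0 : Tendsto t atTop (𝓝 0)) :
    ∃ u : ℕ → E, Tendsto u atTop (𝓝 h) ∧ ∀ᶠ n in atTop, Delta2 f x₀ p (t n) (u n) < r := by
  obtain ⟨g, -, -, hg⟩ := hf
  obtain ⟨r₀, hsr₀, hr₀r⟩ := EReal.lt_iff_exists_real_btwn.1 hr
  -- `(h, r₀)` is the strong limit of `(qₖ.2, r₀)` along a sequence `qₖ → (0⁺, h)` on which the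
  -- quotients stay below `r₀`
  have hgh : (h, r₀) ∈ epiE g := by
    obtain ⟨q, hq, hqlt⟩ := frequently_iff_seq_forall.1
      ((frequently_lt_of_liminf_lt (by isBoundedDefault) hsr₀).and_eventually
        ((eventually_mem_nhdsWithin (a := (0:ℝ)) (s := Ioi 0)).prod_inl (𝓝 h)))
    have hq1 : Tendsto (fun k => (q k).1) atTop (𝓝 0) :=
      (tendsto_nhdsWithin_iff.1 (tendsto_fst.comp hq)).1
    rw [(hg _ (fun k => (hqlt k).2) hq1).1]
    exact ⟨fun k => ((q k).2, r₀), fun k => (hqlt k).1.le,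
      (tendsto_snd.comp hq).prodMk_nhds tendsto_const_nhds⟩
  rw [(hg t ht ht0).1] at hgh
  obtain ⟨v, hv, hvlim⟩ := hgh
  refine ⟨fun n => (v n).1, (continuous_fst.tendsto _).comp hvlim, ?_⟩
  filter_upwards [((continuous_snd.tendsto _).comp hvlim).eventually_lt_const
    (EReal.coe_lt_coe_iff.1 hr₀r)] with n hn
  exact (hv n).trans_lt (by exact_mod_cast hn)

end SecondDini

section MixedGraphicalDerivative

variable {φ : E → ℝ} {c : ℝ} {x₀ h : E}

theorem secondDini_coe_le (hφ : ConcaveOn ℝ univ (fun x => φ x - c * ‖x‖ ^ 2))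
    (hp0 : (0:E) ∈ proxSubdiff (fun x => (φ x : EReal)) x₀) :
    secondDini (fun x => (φ x : EReal)) x₀ 0 h ≤ ((2 * c * ‖h‖ ^ 2 : ℝ) : EReal) := by
  refine secondDini_le_of_forall_Delta2_le fun t ht => ?_
  have hle := delta2Real_le_add_inner hφ ht.ne' (v := 0) (z := 0) (by simpa using hp0) h
  rw [Delta2_coe_zero, EReal.coe_le_coe_iff]
  simpa [delta2Real] using hle

/-- With `eventually_lt_Delta2`, this makes `f''₋(x₀, 0, h)` the limit of `Δ₂(tₙ, vₙ)` along
every `vₙ → h`, not only a lim inf. -/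
theorem eventually_delta2Real_lt (hφ : ConcaveOn ℝ univ (fun x => φ x - c * ‖x‖ ^ 2))
    (hted : TwiceEpiDiff (fun x => (φ x : EReal)) x₀ 0) {m : ℝ}
    (hm : secondDini (fun x => (φ x : EReal)) x₀ 0 h = m) {t : ℕ → ℝ} (ht : ∀ n, 0 < t n)
    (ht0 : Tendsto t atTop (𝓝 0)) {v : ℕ → E} (hv : Tendsto v atTop (𝓝 h)) {b : ℝ}
    (hb : m < b) :
    ∀ᶠ n in atTop, delta2Real φ x₀ (t n) (v n) < b := by
  set ε := (b - m) / 4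
  have hε : 0 < ε := by simp only [ε]; linarith
  have hb' : b = m + 4 * ε := by simp only [ε]; ring
  obtain ⟨u, hu, hup⟩ := hted.exists_tendsto_eventually_Delta2_lt (r := m + ε)
    (by rw [hm]; exact_mod_cast (by linarith)) ht ht0
  have hlow := eventually_lt_Delta2 (a := ((m - ε : ℝ) : EReal))
    (by rw [hm]; exact_mod_cast (by linarith)) (tendsto_nhdsWithin_iff.2 ⟨ht0, .of_forall ht⟩)
    (w := fun n => (2:ℝ) • u n - v n) (by simpa [two_smul] using (hu.const_smul (2:ℝ)).sub hv)
  have hsmall : ∀ᶠ n in atTop, 4 * c * ‖v n - u n‖ ^ 2 < ε := by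
    have : Tendsto (fun n => 4 * c * ‖v n - u n‖ ^ 2) atTop (𝓝 0) := by
      simpa using ((hv.sub hu).norm.pow 2).const_mul (4 * c)
    exact this.eventually_lt_const hε
  filter_upwards [hup, hlow, hsmall] with n hup hlow hsmall
  rw [Delta2_coe_zero, EReal.coe_lt_coe_iff] at hup hlow
  linarith [delta2Real_add_le hφ (ht n).ne' (x₀ := x₀) (u n) (v n)]

/-- The choice `a = m - η²`, `b = m + η²` of the bounds `a < f''₋(x₀, 0, h) < b` lets a single
limit `η → 0` finish the proof. -/
theorem two_mul_inner_ge_of_mem_D2M (hφ : ConcaveOn ℝ univ (fun x => φ x - c * ‖x‖ ^ 2))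
    (hted : TwiceEpiDiff (fun x => (φ x : EReal)) x₀ 0) {m : ℝ}
    (hm : secondDini (fun x => (φ x : EReal)) x₀ 0 h = m) {z : E}
    (hz : z ∈ D2M (fun x => (φ x : EReal)) x₀ 0 h) {η : ℝ} (hη : 0 < η) :
    (1 + η) ^ 2 * (m - η ^ 2) - (m + η ^ 2) - 2 * c * ‖h‖ ^ 2 * η ^ 2 ≤ 2 * η * ⟪z, h⟫ := by
  obtain ⟨t, v, ζ, ht, ht0, hv, hζ, hmem⟩ := hz
  have hlow : ∀ᶠ n in atTop, (1 + η) ^ 2 * (m - η ^ 2) < delta2Real φ x₀ (t n) (v n + η • h) := by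
    have hτ : Tendsto (fun n => (1 + η) * t n) atTop (𝓝[>] 0) :=
      tendsto_nhdsWithin_iff.2 ⟨by simpa using ht0.const_mul (1 + η),
        .of_forall fun n => mem_Ioi.2 (mul_pos (by linarith) (ht n))⟩
    have hw : Tendsto (fun n => (1 + η)⁻¹ • (v n + η • h)) atTop (𝓝 h) := by
      have := (hv.add_const (η • h)).const_smul (1 + η)⁻¹
      rwa [show h + η • h = (1 + η) • h by module, inv_smul_smul₀ (by positivity)] at this
    filter_upwards [eventually_lt_Delta2 (a := ((m - η ^ 2 : ℝ) : EReal))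
      (by rw [hm]; exact_mod_cast (by nlinarith)) hτ hw] with n hn
    rw [Delta2_coe_zero, EReal.coe_lt_coe_iff] at hn
    rw [delta2Real_eq_smul φ x₀ (s := 1 + η) (by positivity)]
    gcongr
  have hup := eventually_delta2Real_lt hφ hted hm ht ht0 hv (b := m + η ^ 2) (by nlinarith)
  have hsub : ∀ n, delta2Real φ x₀ (t n) (v n + η • h) ≤
      delta2Real φ x₀ (t n) (v n) + 2 * η * ⟪ζ n, h⟫ + 2 * c * ‖h‖ ^ 2 * η ^ 2 := by
    intro n
    have := delta2Real_le_add_inner hφ (ht n).ne' (by simpa only [zero_add] using hmem n)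
      (v n + η • h)
    rw [add_sub_cancel_left, real_inner_smul_right, norm_smul, mul_pow, Real.norm_eq_abs,
      sq_abs] at this
    linarith
  refine ge_of_tendsto ((hζ h).const_mul (2 * η)) ?_
  filter_upwards [hlow, hup] with n hlow hup
  linarith [hsub n]

theorem secondDini_le_inner_of_mem_D2M (hφ : ConcaveOn ℝ univ (fun x => φ x - c * ‖x‖ ^ 2))
    (hp0 : (0:E) ∈ proxSubdiff (fun x => (φ x : EReal)) x₀)
    (hted : TwiceEpiDiff (fun x => (φ x : EReal)) x₀ 0) {z : E}
    (hz : z ∈ D2M (fun x => (φ x : EReal)) x₀ 0 h) :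
    secondDini (fun x => (φ x : EReal)) x₀ 0 h ≤ (⟪z, h⟫ : ℝ) := by
  generalize hm : secondDini (fun x => (φ x : EReal)) x₀ 0 h = sD
  induction sD using EReal.rec with
  | bot => exact bot_le
  | top => exact absurd (top_le_iff.1 (hm ▸ secondDini_coe_le hφ hp0)) (EReal.coe_ne_top _)
  | coe m =>
    set K := 2 * c * ‖h‖ ^ 2
    have hlim : Tendsto (fun η => m + η * ((m - (1 + η) ^ 2 - 1 - K) / 2)) (𝓝[>] 0) (𝓝 m) := by
      have : Continuous (fun η => m + η * ((m - (1 + η) ^ 2 - 1 - K) / 2)) := by fun_prop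
      simpa using (this.tendsto 0).mono_left nhdsWithin_le_nhds
    refine EReal.coe_le_coe_iff.2 (le_of_tendsto hlim (eventually_nhdsWithin_of_forall ?_))
    intro η hη
    refine le_of_mul_le_mul_left ?_ (mul_pos two_pos hη)
    linarith [two_mul_inner_ge_of_mem_D2M hφ hted hm hz hη]

end MixedGraphicalDerivative

end InnerProductSpace

theorem soc1_implies_soc2_general (f : H → EReal) (hbot : ∀ x, f x ≠ ⊥)
    (x₀ : H) (hdom : f x₀ ≠ ⊤) (hpara : Paraconcave f)
    (hp0 : (0:H) ∈ proxSubdiff f x₀)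
    (hted : TwiceEpiDiff f x₀ 0) :
    SOC1 f x₀ → SOC2 f x₀ := by
  rintro ⟨β, hβ, hsoc⟩
  obtain ⟨φ, c, rfl, hφ⟩ := exists_eq_coe_of_paraconcave hbot hdom hpara
  refine ⟨β, hβ, fun h hh ⟨z, hz⟩ => ⟨z, hz, ?_⟩⟩
  exact EReal.coe_le_coe_iff.1 ((hsoc h hh).trans (secondDini_le_inner_of_mem_D2M hφ hp0 hted hz))

theorem soc1_implies_soc2 (f : H → EReal) (hlsc : LowerSemicontinuous f) (hbot : ∀ x, f x ≠ ⊥)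
    (hproper : ∃ x, f x ≠ ⊤) (x₀ : H) (hdom : f x₀ ≠ ⊤) (hpara : Paraconcave f)
    (hp0 : (0:H) ∈ proxSubdiff f x₀) (hcont : ContinuousAt f x₀)
    (hted : TwiceEpiDiff f x₀ 0) :
    SOC1 f x₀ → SOC2 f x₀ :=
  soc1_implies_soc2_general f hbot x₀ hdom hpara hp0 hted
end
end

section
/- Let H be a real Hilbert space, T a closed convex cone in H × H, T(h) := {z ∈ H : (h, z) ∈ T}, and N := T° the dual cone of T in H × H. If there exists β > 0 such that ⟨h, z⟩ ≤ −β for all (h, z) ∈ N with ‖z‖ = 1, then there exists β₁ > 0 such that for every unit vector h ∈ H with h ∈ sqri(Proj_h T) there exists z ∈ T(h) with ⟨h, z⟩ ≥ β₁. -/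
open Filter Topology Set Pointwise

noncomputable section

variable {H : Type*} [NormedAddCommGroup H] [InnerProductSpace ℝ H] [CompleteSpace H]

/-!
Fix a unit vector `h ∈ sqri (Proj_h T)` and let `S` be the closed subspace `cone (Proj_h T - h)`.
A functional separating `(h, β)` from the convex cone `{(x, t) | ∃ z, (x, z) ∈ T ∧ t ≤ ⟪h, z⟫}`
in `H × ℝ` has `ℝ`-component `r ≥ 0`; `r = 0` is impossible because `h ∈ Proj_h T`, and for `r > 0`
the rescaled functional is an element `(u, h)` of `T°` with `⟪u, h⟫ ≤ -β`, again a contradiction.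
Hence there are `(h', z) ∈ T` with `h'` arbitrarily close to `h` and `⟪h, z⟫` close to `β`.
The Robinson–Ursescu theorem, applied to the closed convex set `{(s, w) ∈ S × H | (h + s, w) ∈ T}`,
gives `ρ > 0` and `K` such that every `h + s` with `s ∈ S`, `‖s‖ < ρ`, has some `(h + s, w) ∈ T`
with `‖w‖ ≤ K`. A convex combination of `(h', z)` with a small weight on such a point, chosen so
that the first coordinate is exactly `h`, gives the required `z' ∈ T(h)` with `⟪h, z'⟫ ≥ β / 4`.
-/

open Metric

theorem Convex.mem_of_tendsto_sum_smul {V : Type*} [AddCommGroup V] [TopologicalSpace V]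
    [IsTopologicalAddGroup V] [Module ℝ V] [ContinuousSMul ℝ V] {s : Set V}
    (hs : Convex ℝ s) (hsc : IsClosed s) {w : ℕ → ℝ} {p : ℕ → V} {q : V}
    (hw : ∀ j, 0 ≤ w j) (hw1 : HasSum w 1) (hp : ∀ j, p j ∈ s)
    (hq : Tendsto (fun k => ∑ j ∈ Finset.range k, w j • p j) atTop (𝓝 q)) : q ∈ s := by
  have hmass : Tendsto (fun k => (Finset.range k).centerMass w p) atTop (𝓝 q) := by
    simpa [Finset.centerMass] using (hw1.tendsto_sum_nat.inv₀ one_ne_zero).smul hq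
  refine hsc.mem_of_tendsto hmass ?_
  filter_upwards [hw1.tendsto_sum_nat.eventually (lt_mem_nhds one_pos)] with k hk
  exact hs.centerMass_mem (fun j _ => hw j) hk (fun j _ => hp j)

section RobinsonUrsescu

variable {E F : Type*} [NormedAddCommGroup F] {C : Set (E × F)}

def boundedDom (C : Set (E × F)) (K : ℝ) : Set E :=
  Prod.fst '' (C ∩ univ ×ˢ closedBall 0 K)

theorem mem_boundedDom {K : ℝ} {x : E} : x ∈ boundedDom C K ↔ ∃ y, ‖y‖ ≤ K ∧ (x, y) ∈ C := by
  simp [boundedDom, and_comm]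

theorem boundedDom_mono : Monotone (boundedDom C) := fun _ _ hKK' =>
  image_mono (inter_subset_inter_right _ (prod_mono subset_rfl (closedBall_subset_closedBall hKK')))

theorem Convex.boundedDom [AddCommGroup E] [Module ℝ E] [NormedSpace ℝ F] (hC : Convex ℝ C)
    (K : ℝ) : Convex ℝ (boundedDom C K) :=
  (hC.inter (convex_univ.prod (convex_closedBall 0 K))).linear_image (LinearMap.fst ℝ E F)

variable [NormedAddCommGroup E] [NormedSpace ℝ E] [NormedSpace ℝ F]

theorem exists_inv_smul_mem_boundedDom (hC : Convex ℝ C)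
    (habs : ∀ x : E, ∃ t > (0 : ℝ), ∃ y, (t • x, y) ∈ C) (x : E) :
    ∃ n : ℕ, ((n : ℝ) + 1)⁻¹ • x ∈ boundedDom C (n + 1) := by
  obtain ⟨t, ht, y, hy⟩ := habs x
  obtain ⟨_, _, y₀, hy₀⟩ := habs 0
  rw [smul_zero] at hy₀
  obtain ⟨n, hn⟩ := exists_nat_ge (max t⁻¹ (‖y‖ + ‖y₀‖))
  set a := ((n + 1) * t)⁻¹
  have ha : a ≤ 1 := inv_le_one_of_one_le₀ <| calc
    1 = t⁻¹ * t := (inv_mul_cancel₀ ht.ne').symm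
    _ ≤ (n + 1) * t := by gcongr; linarith [le_max_left t⁻¹ (‖y‖ + ‖y₀‖)]
  have ha₀ : 0 < a := by positivity
  refine ⟨n, mem_boundedDom.mpr ⟨a • y + (1 - a) • y₀, ?_, ?_⟩⟩
  · calc ‖a • y + (1 - a) • y₀‖ ≤ a * ‖y‖ + (1 - a) * ‖y₀‖ := by
          refine (norm_add_le _ _).trans_eq ?_
          rw [norm_smul_of_nonneg ha₀.le, norm_smul_of_nonneg (by linarith)]
      _ ≤ ‖y‖ + ‖y₀‖ := by nlinarith [norm_nonneg y, norm_nonneg y₀]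
      _ ≤ n + 1 := by linarith [le_max_right t⁻¹ (‖y‖ + ‖y₀‖)]
  · convert hC hy hy₀ ha₀.le (sub_nonneg.2 ha) (add_sub_cancel a 1) using 1
    ext
    · simp only [Prod.fst_add, Prod.smul_fst, smul_zero, add_zero, smul_smul, a]
      field_simp
    · rfl

/-- Baire category gives an interior point `c` of some `closure (boundedDom C n)`; since a positive
multiple of `-c` lies in some `boundedDom C m`, so does `0`, on the open segment between them. -/
theorem exists_zero_mem_interior_closure_boundedDom [CompleteSpace E] (hC : Convex ℝ C)
    (habs : ∀ x : E, ∃ t > (0 : ℝ), ∃ y, (t • x, y) ∈ C) :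
    ∃ K, (0 : E) ∈ interior (closure (boundedDom C K)) := by
  have hcover : ⋃ n : ℕ, closure (((n : ℝ) + 1) • boundedDom C (n + 1)) = univ := by
    refine eq_univ_of_forall fun x => mem_iUnion.mpr ?_
    obtain ⟨n, hn⟩ := exists_inv_smul_mem_boundedDom hC habs x
    exact ⟨n, subset_closure ((mem_smul_set_iff_inv_smul_mem₀ (by positivity) _ _).mpr hn)⟩
  obtain ⟨n, hn⟩ := nonempty_interior_of_iUnion_of_closed (fun _ => isClosed_closure) hcover
  rw [closure_smul₀, interior_smul₀ (by positivity)] at hn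
  obtain ⟨-, c, hc, rfl⟩ := hn
  obtain ⟨m, hm⟩ := exists_inv_smul_mem_boundedDom hC habs (-c)
  set lam : ℝ := ((m : ℝ) + 1)⁻¹
  refine ⟨max (n + 1) (m + 1), (hC.boundedDom _).closure.openSegment_interior_self_subset_interior
    (interior_mono (closure_mono (boundedDom_mono (le_max_left _ _))) hc)
    (subset_closure (boundedDom_mono (le_max_right _ _) hm)) ⟨lam / (1 + lam), 1 / (1 + lam),
      by positivity, by positivity, ?_, ?_⟩⟩
  · rw [← add_div, add_comm, div_self (by positivity)]
  · simp only [smul_neg, smul_smul]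
    rw [← sub_eq_add_neg, ← sub_smul, div_mul_eq_mul_div, one_mul, sub_self, zero_smul]

theorem ball_half_subset_boundedDom [CompleteSpace F] (hCc : IsClosed C) (hC : Convex ℝ C)
    {ρ K : ℝ} (hρ : ball (0 : E) ρ ⊆ closure (boundedDom C K)) :
    ball (0 : E) (ρ / 2) ⊆ boundedDom C K := by
  intro x hx
  rw [mem_ball_zero_iff] at hx
  have happrox : ∀ v : ball (0 : E) ρ,
      ∃ p ∈ C ∩ univ ×ˢ closedBall 0 K, ‖(v : E) - p.1‖ < ρ / 2 := by
    intro v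
    obtain ⟨-, ⟨p, hp, rfl⟩, hvp⟩ := Metric.mem_closure_iff.mp (hρ v.2) (ρ / 2)
      (by linarith [norm_nonneg x])
    exact ⟨p, hp, by rwa [← dist_eq_norm]⟩
  choose σ hσC hσ using happrox
  -- Approximating twice the previous residual at each step writes `x` as `∑ 2⁻¹ ^ (j + 1) • σⱼ.1`,
  -- an infinite convex combination of points `σⱼ` of `C` whose second coordinates lie in the ball.
  let u : ℕ → ball (0 : E) ρ := fun n => Nat.rec
    (⟨(2 : ℝ) • x, by rw [mem_ball_zero_iff, norm_smul]; norm_num; linarith⟩ : ball (0 : E) ρ)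
    (fun _ v => (⟨(2 : ℝ) • ((v : E) - (σ v).1), by
      rw [mem_ball_zero_iff, norm_smul]; norm_num; linarith [hσ v]⟩ : ball (0 : E) ρ)) n
  set w : ℕ → ℝ := fun j => 1 / 2 / 2 ^ j
  have hresidual : ∀ k, x - (∑ j ∈ Finset.range k, w j • (σ (u j)).1) = w k • (u k).1 := by
    intro k
    induction k with
    | zero => simp [w, u, smul_smul]
    | succ k ih =>
      rw [Finset.sum_range_succ, ← sub_sub, ih]
      simp only [w, u, smul_smul, ← smul_sub]
      congr 1
      ring
  have hfst : Tendsto (fun k => ∑ j ∈ Finset.range k, w j • (σ (u j)).1) atTop (𝓝 x) := by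
    have hw : Tendsto w atTop (𝓝 0) := (hasSum_geometric_two' 1).summable.tendsto_atTop_zero
    have htail : Tendsto (fun k => w k • (u k).1) atTop (𝓝 0) := by
      refine squeeze_zero_norm (fun k => ?_) (by simpa using hw.mul_const ρ)
      rw [norm_smul_of_nonneg (by positivity)]
      exact mul_le_mul_of_nonneg_left (mem_ball_zero_iff.mp (u k).2).le (by positivity)
    simpa using (tendsto_const_nhds.sub htail).congr fun k => by rw [← hresidual k, sub_sub_cancel]
  have hsnd : Summable fun j => w j • (σ (u j)).2 := by
    refine Summable.of_norm_bounded ((hasSum_geometric_two' 1).summable.mul_right K) fun j => ?_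
    rw [norm_smul_of_nonneg (by positivity)]
    exact mul_le_mul_of_nonneg_left (mem_closedBall_zero_iff.mp (hσC (u j)).2.2) (by positivity)
  have hpair : Tendsto (fun k => ∑ j ∈ Finset.range k, w j • σ (u j)) atTop
      (𝓝 (x, ∑' j, w j • (σ (u j)).2)) :=
    (hfst.prodMk_nhds hsnd.hasSum.tendsto_sum_nat).congr fun k => by
      ext <;> simp [Prod.fst_sum, Prod.snd_sum]
  exact ⟨_, (hC.inter (convex_univ.prod (convex_closedBall 0 K))).mem_of_tendsto_sum_smul
    (hCc.inter (isClosed_univ.prod isClosed_closedBall)) (fun j => by positivity)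
    (hasSum_geometric_two' 1) (fun j => hσC (u j)) hpair, rfl⟩

/-- The Robinson–Ursescu theorem. -/
theorem exists_ball_subset_boundedDom [CompleteSpace E] [CompleteSpace F] (hCc : IsClosed C)
    (hC : Convex ℝ C) (habs : ∀ x : E, ∃ t > (0 : ℝ), ∃ y, (t • x, y) ∈ C) :
    ∃ ρ > 0, ∃ K, ball (0 : E) ρ ⊆ boundedDom C K := by
  obtain ⟨K, hK⟩ := exists_zero_mem_interior_closure_boundedDom hC habs
  obtain ⟨ρ, hρ, hball⟩ := Metric.mem_nhds_iff.mp (mem_interior_iff_mem_nhds.mp hK)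
  exact ⟨ρ / 2, by positivity, K, ball_half_subset_boundedDom hCc hC hball⟩

end RobinsonUrsescu

section Separation

theorem exists_strongDual_pos_of_notMem_closure {V : Type*} [AddCommGroup V] [TopologicalSpace V]
    [IsTopologicalAddGroup V] [Module ℝ V] [ContinuousSMul ℝ V] [LocallyConvexSpace ℝ V]
    {M : Set V} (hM : Convex ℝ M) (hcone : ∀ c : ℝ, 0 ≤ c → ∀ q ∈ M, c • q ∈ M)
    (h0 : (0 : V) ∈ M) {p : V} (hp : p ∉ closure M) :
    ∃ f : StrongDual ℝ V, (∀ q ∈ M, f q ≤ 0) ∧ 0 < f p := by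
  obtain ⟨f, u, hfu, hup⟩ := geometric_hahn_banach_closed_point hM.closure isClosed_closure hp
  have hu : 0 < u := by simpa using hfu 0 (subset_closure h0)
  refine ⟨f, fun q hq => ?_, hu.trans hup⟩
  by_contra! hfq
  have := hfu _ (subset_closure (hcone (u / f q) (by positivity) q hq))
  rw [map_smul, smul_eq_mul, div_mul_cancel₀ _ hfq.ne'] at this
  exact lt_irrefl _ this

theorem strongDual_prod_real_apply (f : StrongDual ℝ (H × ℝ)) (x : H) (t : ℝ) :
    f (x, t) =
      inner ℝ ((InnerProductSpace.toDual ℝ H).symm (f ∘L .inl ℝ H ℝ)) x + t * f (0, 1) := by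
  rw [InnerProductSpace.toDual_symm_apply, ContinuousLinearMap.comp_apply,
    ContinuousLinearMap.inl_apply, ← smul_eq_mul, ← map_smul, ← map_add]
  simp

end Separation

section ValueHypograph

variable {E : Type*} [NormedAddCommGroup E] [InnerProductSpace ℝ E]

def valueHypograph (T : Set (E × E)) (h : E) : Set (E × ℝ) :=
  {p | ∃ z, (p.1, z) ∈ T ∧ p.2 ≤ inner ℝ h z}

theorem Convex.valueHypograph {T : Set (E × E)} (hT : Convex ℝ T) (h : E) :
    Convex ℝ (valueHypograph T h) := by
  rintro ⟨x₁, t₁⟩ ⟨z₁, hz₁, ht₁⟩ ⟨x₂, t₂⟩ ⟨z₂, hz₂, ht₂⟩ a b ha hb hab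
  refine ⟨a • z₁ + b • z₂, by simpa using hT hz₁ hz₂ ha hb hab, ?_⟩
  simp only [Prod.smul_mk, Prod.mk_add_mk, smul_eq_mul, inner_add_right, real_inner_smul_right]
  gcongr

theorem smul_mem_valueHypograph {T : Set (E × E)} (hT : ∀ c : ℝ, 0 ≤ c → ∀ q ∈ T, c • q ∈ T)
    {h : E} {c : ℝ} (hc : 0 ≤ c) {p : E × ℝ} (hp : p ∈ valueHypograph T h) :
    c • p ∈ valueHypograph T h := by
  obtain ⟨z, hz, hpz⟩ := hp
  refine ⟨c • z, by simpa using hT c hc _ hz, ?_⟩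
  simp only [Prod.smul_snd, smul_eq_mul, real_inner_smul_right]
  gcongr

theorem exists_inner_ge_of_mem_closure_valueHypograph {T : Set (E × E)} (hT : Convex ℝ T)
    {S : Submodule ℝ E} {h : E} (hh : ‖h‖ = 1) (hdomS : ∀ p ∈ T, p.1 - h ∈ S) {ρ K β : ℝ} (hρ : 0 < ρ) (hβ : 0 < β)
    (hsection : ∀ x ∈ S, ‖x‖ < ρ → ∃ w, ‖w‖ ≤ K ∧ (h + x, w) ∈ T)
    (hclos : (h, β) ∈ closure (valueHypograph T h)) :
    ∃ z, (h, z) ∈ T ∧ β / 4 ≤ inner ℝ h z := by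
  have hK : 0 ≤ K := by
    obtain ⟨w, hw, -⟩ := hsection 0 S.zero_mem (by simpa using hρ)
    exact (norm_nonneg w).trans hw
  set μ := β / (4 * (K + β))
  have hμ : 0 < μ := by positivity
  have hμ4 : μ ≤ 1 / 4 := by rw [div_le_iff₀ (by positivity)]; linarith
  have hμK : μ * K ≤ β / 4 := by
    rw [div_mul_eq_mul_div, div_le_iff₀ (by positivity)]; nlinarith
  obtain ⟨⟨h', t⟩, ⟨z, hz, htz⟩, hdist⟩ :=
    Metric.mem_closure_iff.mp hclos (min (β / 4) (μ * ρ)) (by positivity)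
  rw [Prod.dist_eq, max_lt_iff, lt_min_iff, lt_min_iff, dist_eq_norm, Real.dist_eq] at hdist
  obtain ⟨⟨-, hnear⟩, htβ, -⟩ := hdist
  dsimp only at hz htz hnear htβ
  set x := μ⁻¹ • (1 - μ) • (h - h')
  have hxS : x ∈ S := S.smul_mem _ (S.smul_mem _ (by simpa using S.neg_mem (hdomS _ hz)))
  have hxρ : ‖x‖ < ρ := by
    rw [norm_smul_of_nonneg (inv_nonneg.2 hμ.le), norm_smul_of_nonneg (by linarith),
      inv_mul_lt_iff₀ hμ]
    nlinarith [norm_nonneg (h - h')]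
  obtain ⟨w, hw, hwT⟩ := hsection x hxS hxρ
  have hpt : (1 - μ) • (h', z) + μ • (h + x, w) = (h, (1 - μ) • z + μ • w) := by
    ext
    · simp only [Prod.fst_add, Prod.smul_fst, smul_add, x, smul_inv_smul₀ hμ.ne']
      module
    · rfl
  refine ⟨_, hpt ▸ hT hz hwT (by linarith) hμ.le (sub_add_cancel 1 μ), ?_⟩
  have hzβ : 3 * β / 4 ≤ inner ℝ h z := by
    linarith [(abs_lt.mp htβ).2]
  have hwK : -K ≤ inner ℝ h w := by
    have := neg_le_of_abs_le (abs_real_inner_le_norm h w)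
    rw [hh, one_mul] at this
    linarith
  rw [inner_add_right, real_inner_smul_right, real_inner_smul_right]
  nlinarith [mul_le_mul_of_nonneg_left hzβ (by linarith : 0 ≤ 1 - μ),
    mul_le_mul_of_nonneg_left hwK hμ.le, mul_le_mul_of_nonneg_right hμ4 hβ.le]

end ValueHypograph

theorem mem_closure_valueHypograph {T : Set (H × H)} (hT : Convex ℝ T)
    (hTcone : ∀ c : ℝ, 0 ≤ c → ∀ q ∈ T, c • q ∈ T) {β : ℝ}
    (hdual : ∀ q ∈ dualConePair T, ‖q.2‖ = 1 → inner ℝ q.1 q.2 ≤ -β) {h z₀ : H} (hh : ‖h‖ = 1)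
    (hz₀ : (h, z₀) ∈ T) : (h, β) ∈ closure (valueHypograph T h) := by
  have hT0 : (0 : H × H) ∈ T := by simpa using hTcone 0 le_rfl _ hz₀
  by_contra hnot
  obtain ⟨f, hfM, hfp⟩ := exists_strongDual_pos_of_notMem_closure (hT.valueHypograph h)
    (fun c hc _ => smul_mem_valueHypograph hTcone hc) ⟨0, hT0, by simp⟩ hnot
  set u := (InnerProductSpace.toDual ℝ H).symm (f ∘L .inl ℝ H ℝ)
  set r := f (0, 1)
  have hf : ∀ x t, f (x, t) = inner ℝ u x + t * r := strongDual_prod_real_apply f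
  have hr : 0 ≤ r := by simpa [hf] using hfM (0, -1) ⟨0, hT0, by simp⟩
  rw [hf] at hfp
  rcases hr.eq_or_lt with hr0 | hrpos
  · have := hfM (h, inner ℝ h z₀) ⟨z₀, hz₀, le_rfl⟩
    rw [hf] at this
    simp only [← hr0, mul_zero, add_zero] at this hfp
    linarith
  · have hdualpt : (r⁻¹ • u, h) ∈ dualConePair T := fun q hq => by
      have hq' := hfM (q.1, inner ℝ h q.2) ⟨q.2, hq, le_rfl⟩
      rw [hf] at hq'
      calc inner ℝ (r⁻¹ • u) q.1 + inner ℝ h q.2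
          = r⁻¹ * (inner ℝ u q.1 + inner ℝ h q.2 * r) := by
            rw [real_inner_smul_left]; field_simp
        _ ≤ 0 := mul_nonpos_of_nonneg_of_nonpos (inv_nonneg.2 hr) hq'
    have := hdual _ hdualpt hh
    rw [real_inner_smul_left, inv_mul_le_iff₀ hrpos] at this
    linarith

theorem exists_section_of_mem_sqri {T : Set (H × H)} (hT : IsClosed T) (hTconv : Convex ℝ T)
    {h : H} (hsq : h ∈ sqri (Prod.fst '' T)) :
    ∃ S : Submodule ℝ H, (∀ p ∈ T, p.1 - h ∈ S) ∧
      ∃ ρ > 0, ∃ K, ∀ x ∈ S, ‖x‖ < ρ → ∃ w, ‖w‖ ≤ K ∧ (h + x, w) ∈ T := by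
  obtain ⟨⟨⟨h', z₀⟩, hz₀, hh'⟩, S, hS, hcone⟩ := hsq
  obtain rfl : h = h' := hh'.symm
  have : CompleteSpace S := hS.completeSpace_coe
  let C : Set (S × H) := {p | (h + p.1, p.2) ∈ T}
  have hC : Convex ℝ C := fun p hp q hq a b ha hb hab => by
    change (h + ((a • p + b • q).1 : H), (a • p + b • q).2) ∈ T
    convert hTconv hp hq ha hb hab using 1
    ext
    · simp only [Prod.fst_add, Prod.smul_fst, Submodule.coe_add, Submodule.coe_smul, smul_add]
      rw [add_add_add_comm, ← add_smul, hab, one_smul]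
    · rfl
  have habs : ∀ x : S, ∃ t > (0 : ℝ), ∃ y, (t • x, y) ∈ C := by
    intro x
    obtain ⟨t, ht, _, ⟨⟨a, y⟩, hy, rfl⟩, hx⟩ : (x : H) ∈ coneGen (Prod.fst '' T) h := hcone ▸ x.2
    rcases ht.eq_or_lt with rfl | ht
    · exact ⟨1, one_pos, z₀, by simpa [C, Subtype.ext_iff, hx] using hz₀⟩
    · exact ⟨t⁻¹, inv_pos.2 ht, y, by simpa [C, hx, smul_smul, inv_mul_cancel₀ ht.ne'] using hy⟩
  obtain ⟨ρ, hρ, K, hball⟩ := exists_ball_subset_boundedDom (hT.preimage (by fun_prop)) hC habs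
  refine ⟨S, fun p hp => ?_, ρ, hρ, K, fun x hx hxρ => ?_⟩
  · rw [← SetLike.mem_coe, ← hcone]
    exact ⟨1, zero_le_one, p.1, ⟨p, hp, rfl⟩, (one_smul _ _).symm⟩
  · obtain ⟨w, hw, hwT⟩ :=
      mem_boundedDom.mp (hball (mem_ball_zero_iff.mpr (show ‖(⟨x, hx⟩ : S)‖ < ρ from hxρ)))
    exact ⟨w, hw, hwT⟩

theorem dual_cone_duality_i_to_ii (T : Set (H × H)) (hTclosed : IsClosed T)
    (hTconv : Convex ℝ T) (hTcone : ∀ c : ℝ, 0 ≤ c → ∀ q ∈ T, c • q ∈ T)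
    (hyp : ∃ β > (0:ℝ), ∀ q ∈ dualConePair T, ‖q.2‖ = 1 → (inner ℝ q.1 q.2 : ℝ) ≤ -β) :
    ∃ β₁ > (0:ℝ), ∀ h : H, ‖h‖ = 1 → h ∈ sqri (Prod.fst '' T) →
      ∃ z : H, (h, z) ∈ T ∧ β₁ ≤ (inner ℝ h z : ℝ) := by
  obtain ⟨β, hβ, hdual⟩ := hyp
  refine ⟨β / 4, by positivity, fun h hh hsq => ?_⟩
  obtain ⟨S, hdomS, ρ, hρ, K, hsection⟩ := exists_section_of_mem_sqri hTclosed hTconv hsq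
  obtain ⟨⟨_, z₀⟩, hz₀, rfl⟩ := hsq.1
  exact exists_inner_ge_of_mem_closure_valueHypograph hTconv hh hdomS hρ hβ hsection
    (mem_closure_valueHypograph hTconv hTcone hdual hh hz₀)
end
end

section
/- Let H be a real Hilbert space, T a closed convex cone in H × H, T(h) := {z ∈ H : (h, z) ∈ T}, and N := T° the dual cone of T in H × H. Assume qri N ≠ ∅ and qri(Proj_z N) ⊆ sqri(Proj_h T). If there exists β₁ > 0 such that for every unit vector h ∈ H with h ∈ sqri(Proj_h T) there exists z ∈ T(h) with ⟨h, z⟩ ≥ β₁, then there exists β > 0 (indeed β = β₁ works) such that ⟨h, z⟩ ≤ −β for all (h, z) ∈ N with ‖z‖ = 1. -/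
open Filter Topology Set Pointwise

noncomputable section

variable {H : Type*} [NormedAddCommGroup H] [InnerProductSpace ℝ H] [CompleteSpace H]

/-
Let `N := dualConePair T` and `f p := ⟪p.1, p.2⟫ + β₁ ‖p.2‖²`. For `p ∈ qri N`, the vector `p.2`
lies in `qri (Proj_z N) ⊆ sqri (Proj_h T)`; rescaling the hypothesis from unit vectors gives
`(p.2, z) ∈ T` with `⟪p.2, z⟫ ≥ β₁ ‖p.2‖²`, and testing `p ∈ N` against `(p.2, z)` yields `f p ≤ 0`.
Since `N` is convex with nonempty quasi-relative interior, every `q ∈ N` is a limit of points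
of `qri N` along a segment, so `f q ≤ 0` by continuity, which for `‖q.2‖ = 1` is the claim.
-/

open RealInnerProductSpace

section QuasiRelativeInterior

variable {E : Type*} [NormedAddCommGroup E] [NormedSpace ℝ E]

lemma openSegment_subset_qri {A : Set E} (hA : Convex ℝ A) {x y : E} (hx : x ∈ qri A)
    (hy : y ∈ A) : openSegment ℝ x y ⊆ qri A := by
  rintro w ⟨a, b, ha, hb, hab, rfl⟩
  obtain ⟨hxA, S, hS⟩ := hx
  have hSx : coneGen A x ⊆ S := hS ▸ subset_closure
  have hsub_mem : ∀ a' ∈ A, a' - x ∈ S := fun a' ha' => hSx ⟨1, zero_le_one, a', ha', by simp⟩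
  refine ⟨hA hxA hy ha.le hb.le hab, S, subset_antisymm ?_ ?_⟩
  · refine closure_minimal ?_ (hS ▸ isClosed_closure)
    rintro _ ⟨t, ht, a', ha', rfl⟩
    have hdiff : a' - (a • x + b • y) = (a' - x) + (-b) • (y - x) := by
      rw [eq_sub_of_add_eq hab]; module
    rw [hdiff]
    exact S.smul_mem t (S.add_mem (hsub_mem a' ha') (S.smul_mem _ (hsub_mem y hy)))
  · rw [← hS]
    refine closure_mono ?_
    rintro _ ⟨t, ht, a', ha', rfl⟩
    refine ⟨t / a, div_nonneg ht ha.le, a • a' + b • y, hA ha' hy ha.le hb.le hab, ?_⟩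
    rw [show a • a' + b • y - (a • x + b • y) = a • (a' - x) by module, smul_smul,
      div_mul_cancel₀ _ ha.ne']

lemma subset_closure_qri {A : Set E} (hA : Convex ℝ A) (hqri : (qri A).Nonempty) :
    A ⊆ closure (qri A) := by
  obtain ⟨x, hx⟩ := hqri
  intro y hy
  exact closure_mono (openSegment_subset_qri hA hx hy)
    (segment_subset_closure_openSegment (right_mem_segment ℝ x y))

variable {F : Type*} [NormedAddCommGroup F] [NormedSpace ℝ F]

lemma coneGen_image (L : E →ₗ[ℝ] F) (A : Set E) (x : E) :
    coneGen (L '' A) (L x) = L '' coneGen A x := by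
  ext y
  constructor
  · rintro ⟨t, ht, _, ⟨a, ha, rfl⟩, rfl⟩
    exact ⟨t • (a - x), ⟨t, ht, a, ha, rfl⟩, by simp⟩
  · rintro ⟨_, ⟨t, ht, a, ha, rfl⟩, rfl⟩
    exact ⟨t, ht, L a, ⟨a, ha, rfl⟩, by simp⟩

lemma map_mem_qri_image (L : E →L[ℝ] F) {A : Set E} {x : E} (hx : x ∈ qri A) :
    L x ∈ qri (L '' A) := by
  obtain ⟨hxA, S, hS⟩ := hx
  refine ⟨⟨x, hxA, rfl⟩, (S.map (L : E →ₗ[ℝ] F)).topologicalClosure, ?_⟩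
  rw [Submodule.topologicalClosure_coe, Submodule.map_coe, ← hS]
  exact (coneGen_image (L : E →ₗ[ℝ] F) A x).symm ▸
    subset_antisymm (closure_mono (Set.image_mono subset_closure))
      (closure_minimal (image_closure_subset_closure_image L.continuous) isClosed_closure)

lemma smul_mem_sqri {A : Set E} (hA : ∀ c : ℝ, 0 < c → ∀ a ∈ A, c • a ∈ A) {x : E}
    (hx : x ∈ sqri A) {c : ℝ} (hc : 0 < c) : c • x ∈ sqri A := by
  obtain ⟨hxA, S, hScl, hS⟩ := hx
  refine ⟨hA c hc x hxA, S, hScl, hS ▸ Set.ext fun y => ⟨?_, ?_⟩⟩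
  · rintro ⟨t, ht, a, ha, rfl⟩
    refine ⟨t * c, by positivity, c⁻¹ • a, hA _ (inv_pos.2 hc) a ha, ?_⟩
    match_scalars <;> field_simp
  · rintro ⟨t, ht, a, ha, rfl⟩
    refine ⟨t * c⁻¹, by positivity, c • a, hA c hc a ha, ?_⟩
    match_scalars <;> field_simp

end QuasiRelativeInterior

section InnerProduct

variable {E : Type*} [NormedAddCommGroup E] [InnerProductSpace ℝ E]

lemma convex_dualConePair (S : Set (E × E)) : Convex ℝ (dualConePair S) := by
  intro a ha b hb μ ν hμ hν _ p hp
  have hap := ha p hp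
  have hbp := hb p hp
  simp only [Prod.smul_fst, Prod.smul_snd, Prod.fst_add, Prod.snd_add, inner_add_left,
    real_inner_smul_left]
  nlinarith

lemma exists_mem_inner_ge_of_mem_sqri {T : Set (E × E)}
    (hTcone : ∀ c : ℝ, 0 ≤ c → ∀ q ∈ T, c • q ∈ T) {β₁ : ℝ}
    (hT : ∀ h : E, ‖h‖ = 1 → h ∈ sqri (Prod.fst '' T) → ∃ z : E, (h, z) ∈ T ∧ β₁ ≤ ⟪h, z⟫)
    {v : E} (hv : v ∈ sqri (Prod.fst '' T)) : ∃ z : E, (v, z) ∈ T ∧ β₁ * ‖v‖ ^ 2 ≤ ⟪v, z⟫ := by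
  rcases eq_or_ne v 0 with rfl | hv0
  · obtain ⟨⟨_, z⟩, hz, rfl⟩ := hv.1
    exact ⟨z, hz, by simp⟩
  have hpos : 0 < ‖v‖ := norm_pos_iff.2 hv0
  have hfstcone : ∀ c : ℝ, 0 < c → ∀ a ∈ Prod.fst '' T, c • a ∈ Prod.fst '' T := by
    rintro c hc _ ⟨p, hp, rfl⟩
    exact ⟨c • p, hTcone c hc.le p hp, rfl⟩
  obtain ⟨z, hzT, hz⟩ := hT (‖v‖⁻¹ • v) (norm_smul_inv_norm hv0)
    (smul_mem_sqri hfstcone hv (inv_pos.2 hpos))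
  refine ⟨‖v‖ • z, ?_, ?_⟩
  · simpa [smul_inv_smul₀ hpos.ne'] using hTcone ‖v‖ hpos.le _ hzT
  · rw [real_inner_smul_left] at hz
    rw [real_inner_smul_right]
    calc β₁ * ‖v‖ ^ 2 ≤ ‖v‖⁻¹ * ⟪v, z⟫ * ‖v‖ ^ 2 := by gcongr
      _ = ‖v‖ * ⟪v, z⟫ := by field_simp

end InnerProduct

theorem dual_cone_duality_ii_to_i_general (T : Set (H × H))
    (hTcone : ∀ c : ℝ, 0 ≤ c → ∀ q ∈ T, c • q ∈ T)
    (hqriN : (qri (dualConePair T)).Nonempty)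
    (hincl : qri (Prod.snd '' dualConePair T) ⊆ sqri (Prod.fst '' T)) :
    ∀ β₁ > (0:ℝ), (∀ h : H, ‖h‖ = 1 → h ∈ sqri (Prod.fst '' T) →
        ∃ z : H, (h, z) ∈ T ∧ β₁ ≤ (inner ℝ h z : ℝ)) →
      ∀ q ∈ dualConePair T, ‖q.2‖ = 1 → (inner ℝ q.1 q.2 : ℝ) ≤ -β₁ := by
  intro β₁ _ hT q hq hq2
  have hqri_le : qri (dualConePair T) ⊆ {p : H × H | ⟪p.1, p.2⟫ + β₁ * ‖p.2‖ ^ 2 ≤ 0} := by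
    intro p hp
    have hp2 : p.2 ∈ sqri (Prod.fst '' T) :=
      hincl (map_mem_qri_image (ContinuousLinearMap.snd ℝ H H) hp)
    obtain ⟨z, hzT, hz⟩ := exists_mem_inner_ge_of_mem_sqri hTcone hT hp2
    have hpz : ⟪p.1, p.2⟫ + ⟪p.2, z⟫ ≤ 0 := hp.1 (p.2, z) hzT
    show ⟪p.1, p.2⟫ + β₁ * ‖p.2‖ ^ 2 ≤ 0
    linarith
  have hclosed : IsClosed {p : H × H | ⟪p.1, p.2⟫ + β₁ * ‖p.2‖ ^ 2 ≤ 0} :=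
    isClosed_le (by fun_prop) continuous_const
  have hq_le := (hclosed.closure_subset_iff.2 hqri_le)
    (subset_closure_qri (convex_dualConePair T) hqriN hq)
  simp only [Set.mem_ofPred_eq, hq2] at hq_le
  linarith

theorem dual_cone_duality_ii_to_i (T : Set (H × H)) (hTclosed : IsClosed T)
    (hTconv : Convex ℝ T) (hTcone : ∀ c : ℝ, 0 ≤ c → ∀ q ∈ T, c • q ∈ T)
    (hqriN : (qri (dualConePair T)).Nonempty)
    (hincl : qri (Prod.snd '' dualConePair T) ⊆ sqri (Prod.fst '' T)) :
    ∀ β₁ > (0:ℝ), (∀ h : H, ‖h‖ = 1 → h ∈ sqri (Prod.fst '' T) →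
        ∃ z : H, (h, z) ∈ T ∧ β₁ ≤ (inner ℝ h z : ℝ)) →
      ∀ q ∈ dualConePair T, ‖q.2‖ = 1 → (inner ℝ q.1 q.2 : ℝ) ≤ -β₁ :=
  dual_cone_duality_ii_to_i_general T hTcone hqriN hincl
end
end

section
/- Let H be a real Hilbert space, f : H → ℝ ∪ {+∞} a proper lower semicontinuous function and x̄ ∈ dom f. Then the following are equivalent: (i) x̄ is a strict local minimizer of order two for f; (ii) 0 ∈ ∂_p f(x̄) and there exists β > 0 such that f''₋(x̄, 0, h) ≥ β holds uniformly with respect to h in the unit sphere S_H; (iii) liminf_{t↓0} ( inf_{h ∈ S_H} 2(f(x̄ + th) − f(x̄))/t² ) > 0. -/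
open Filter Topology Set Pointwise

noncomputable section

variable {H : Type*} [NormedAddCommGroup H] [InnerProductSpace ℝ H] [CompleteSpace H]

/-! In polar coordinates `x = x₀ + t • h`, `t = ‖x - x₀‖`, `‖h‖ = 1`, quadratic growth of `f` at `x₀`
with constant `β` says exactly that `Δ₂f(x₀, 0, t, h) ≥ β` for all small `t > 0`, uniformly on the
unit sphere. Both (ii) and (iii) are reformulations of this uniform bound; for (ii) one also
perturbs `h` off the sphere by `η ≤ 1`, which lowers `β ‖h‖²` by at most `2 β η`. -/

namespace EReal

theorem coe_le_coe_mul_sub_coe_iff {a c r : ℝ} (ha : 0 < a) {b : EReal} :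
    (c : EReal) ≤ a * (b - r) ↔ ((r + c / a : ℝ) : EReal) ≤ b := by
  induction b using EReal.rec with
  | bot => simp [EReal.coe_mul_bot_of_pos ha]
  | coe s =>
    norm_cast
    rw [← div_le_iff₀' ha]
    constructor <;> intro <;> linarith
  | top => simp [EReal.coe_mul_top_of_pos ha]

theorem zero_lt_liminf_iff_exists_coe_le {α : Type*} {l : Filter α} {u : α → EReal} :
    0 < liminf u l ↔ ∃ β > (0:ℝ), ∀ᶠ t in l, (β : EReal) ≤ u t := by
  constructor
  · intro hpos
    obtain ⟨β, hβ, hβu⟩ := EReal.lt_iff_exists_real_btwn.1 hpos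
    exact ⟨β, EReal.coe_pos.1 hβ, (eventually_lt_of_lt_liminf hβu).mono fun _ => le_of_lt⟩
  · rintro ⟨β, hβ, hu⟩
    exact (EReal.coe_pos.2 hβ).trans_le (le_liminf_of_le (by isBoundedDefault) hu)

end EReal

section

variable {E : Type*} [NormedAddCommGroup E] [InnerProductSpace ℝ E] {f : E → EReal} {x₀ : E} {r : ℝ}

theorem Delta2_zero (f : E → EReal) (x₀ : E) (t : ℝ) (u : E) :
    Delta2 f x₀ 0 t u = ((2 / t ^ 2 : ℝ) : EReal) * (f (x₀ + t • u) - f x₀) := by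
  simp [Delta2]

theorem coe_le_Delta2_zero_iff (hr : f x₀ = r) {c t : ℝ} (ht : 0 < t) (u : E) :
    (c : EReal) ≤ Delta2 f x₀ 0 t u ↔ f x₀ + ((c / 2 * t ^ 2 : ℝ) : EReal) ≤ f (x₀ + t • u) := by
  rw [Delta2_zero, hr, EReal.coe_le_coe_mul_sub_coe_iff (by positivity), ← EReal.coe_add]
  field_simp

theorem strictLocalMinOrder2_iff_eventually_le_Delta2 (hr : f x₀ = r) :
    StrictLocalMinOrder2 f x₀ ↔ ∃ β > (0:ℝ), ∀ᶠ t in 𝓝[>] (0:ℝ),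
      ∀ h ∈ Metric.sphere (0:E) 1, (β : EReal) ≤ Delta2 f x₀ 0 t h := by
  constructor
  · rintro ⟨β, hβ, δ, hδ, hmin⟩
    refine ⟨β, hβ, ?_⟩
    filter_upwards [Ioo_mem_nhdsGT hδ] with t ht h hh
    have hth : ‖(x₀ + t • h) - x₀‖ = t := by
      rw [add_sub_cancel_left, norm_smul, mem_sphere_zero_iff_norm.1 hh, mul_one,
        Real.norm_of_nonneg ht.1.le]
    have hx := hmin _ (by rw [Metric.mem_ball, dist_eq_norm, hth]; exact ht.2)
    rw [hth] at hx
    rwa [coe_le_Delta2_zero_iff hr ht.1]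
  · rintro ⟨β, hβ, hev⟩
    obtain ⟨δ, hδ, hIoo⟩ := mem_nhdsGT_iff_exists_Ioo_subset.1 hev
    refine ⟨β, hβ, δ, hδ, fun x hx => ?_⟩
    rcases eq_or_ne x x₀ with rfl | hne
    · simp
    set t := ‖x - x₀‖
    have ht : 0 < t := norm_pos_iff.2 (sub_ne_zero.2 hne)
    have hsphere : t⁻¹ • (x - x₀) ∈ Metric.sphere (0:E) 1 := by
      rw [mem_sphere_zero_iff_norm, norm_smul, norm_inv, norm_norm, inv_mul_cancel₀ ht.ne']
    have hbound := hIoo ⟨ht, by rwa [Metric.mem_ball, dist_eq_norm] at hx⟩ _ hsphere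
    rwa [coe_le_Delta2_zero_iff hr ht, smul_inv_smul₀ ht.ne', add_sub_cancel] at hbound

theorem mul_sq_norm_le_Delta2_of_forall_ball (hr : f x₀ = r) {β δ t : ℝ}
    (hmin : ∀ x ∈ Metric.ball x₀ δ, f x₀ + ((β / 2 * ‖x - x₀‖ ^ 2 : ℝ) : EReal) ≤ f x)
    (ht : 0 < t) {u : E} (htu : t * ‖u‖ < δ) :
    ((β * ‖u‖ ^ 2 : ℝ) : EReal) ≤ Delta2 f x₀ 0 t u := by
  have hnorm : ‖(x₀ + t • u) - x₀‖ = t * ‖u‖ := by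
    rw [add_sub_cancel_left, norm_smul, Real.norm_of_nonneg ht.le]
  have hx := hmin _ (by rwa [Metric.mem_ball, dist_eq_norm, hnorm])
  rw [hnorm] at hx
  rw [coe_le_Delta2_zero_iff hr ht]
  convert hx using 3
  ring

theorem uniformDiniGE_sphere_of_forall_ball (hr : f x₀ = r) {β δ : ℝ} (hβ : 0 < β) (hδ : 0 < δ)
    (hmin : ∀ x ∈ Metric.ball x₀ δ, f x₀ + ((β / 2 * ‖x - x₀‖ ^ 2 : ℝ) : EReal) ≤ f x) :
    UniformDiniGE f x₀ 0 β (Metric.sphere (0:E) 1) := by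
  intro ε hε
  set η := min 1 (min (δ / 2) (ε / (2 * β)))
  have hη : 0 < η := lt_min one_pos (lt_min (half_pos hδ) (by positivity))
  have hη1 : η ≤ 1 := min_le_left _ _
  have hηδ : η ≤ δ / 2 := (min_le_right _ _).trans (min_le_left _ _)
  have hηε : 2 * β * η ≤ ε := by
    have hη' : η ≤ ε / (2 * β) := (min_le_right _ _).trans (min_le_right _ _)
    rwa [le_div_iff₀' (by positivity)] at hη'
  refine ⟨η, hη, fun t ht htη _ ⟨a, ha, b, hb, hab⟩ => ?_⟩
  subst hab
  rw [mem_sphere_zero_iff_norm] at ha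
  rw [mem_closedBall_zero_iff] at hb
  have hupper : ‖a + b‖ ≤ 1 + η := ha ▸ (norm_add_le a b).trans (by linarith)
  have hlower : 1 - η ≤ ‖a + b‖ := by
    have := norm_sub_norm_le a (-b)
    rw [norm_neg, sub_neg_eq_add] at this
    linarith
  have htab : t * ‖a + b‖ < δ := by nlinarith
  have hsq : 1 - 2 * η ≤ ‖a + b‖ ^ 2 := by nlinarith
  refine le_trans ?_ (mul_sq_norm_le_Delta2_of_forall_ball hr hmin ht htab)
  exact_mod_cast (by nlinarith : β - ε ≤ β * ‖a + b‖ ^ 2)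

theorem UniformDiniGE.eventually_le_Delta2 {p : E} {β ε : ℝ} {A : Set E}
    (hU : UniformDiniGE f x₀ p β A) (hε : 0 < ε) :
    ∀ᶠ t in 𝓝[>] (0:ℝ), ∀ h ∈ A, ((β - ε : ℝ) : EReal) ≤ Delta2 f x₀ p t h := by
  obtain ⟨δ, hδ, hD⟩ := hU ε hε
  filter_upwards [Ioo_mem_nhdsGT hδ] with t ht h hh
  exact hD t ht.1 ht.2 h <| by
    simpa using add_mem_add hh (Metric.mem_closedBall_self (x := (0:E)) hδ.le)

theorem StrictLocalMinOrder2.zero_mem_proxSubdiff (hmin : StrictLocalMinOrder2 f x₀) :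
    (0:E) ∈ proxSubdiff f x₀ := by
  obtain ⟨β, hβ, δ, hδ, hball⟩ := hmin
  refine ⟨β, hβ, δ, hδ, fun y hy => (hball y hy).trans' ?_⟩
  gcongr
  simp only [inner_zero_left, zero_sub]
  linarith [show 0 ≤ β / 2 * ‖y - x₀‖ ^ 2 by positivity]

end

theorem strict_local_min_order_two_characterization_general (f : H → EReal) (hbot : ∀ x, f x ≠ ⊥)
    (x₀ : H) (hdom : f x₀ ≠ ⊤) :
    (StrictLocalMinOrder2 f x₀ ↔
      ((0:H) ∈ proxSubdiff f x₀ ∧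
        ∃ β > (0:ℝ), UniformDiniGE f x₀ 0 β (Metric.sphere (0:H) 1))) ∧
    (StrictLocalMinOrder2 f x₀ ↔
      0 < Filter.liminf (fun t : ℝ =>
        sInf ((fun h : H => ((2 / t ^ 2 : ℝ) : EReal) * (f (x₀ + t • h) - f x₀)) ''
          Metric.sphere (0:H) 1)) (nhdsWithin (0:ℝ) (Set.Ioi 0))) := by
  have hr : f x₀ = ((f x₀).toReal : EReal) := (EReal.coe_toReal hdom (hbot x₀)).symm
  refine ⟨⟨fun hmin => ⟨hmin.zero_mem_proxSubdiff, ?_⟩, fun ⟨_, β, hβ, hU⟩ => ?_⟩, ?_⟩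
  · obtain ⟨β, hβ, δ, hδ, hball⟩ := hmin
    exact ⟨β, hβ, uniformDiniGE_sphere_of_forall_ball hr hβ hδ hball⟩
  · refine (strictLocalMinOrder2_iff_eventually_le_Delta2 hr).2 ⟨β / 2, half_pos hβ, ?_⟩
    simpa only [sub_half] using hU.eventually_le_Delta2 (half_pos hβ)
  · simp_rw [strictLocalMinOrder2_iff_eventually_le_Delta2 hr,
      EReal.zero_lt_liminf_iff_exists_coe_le, le_sInf_iff, Set.forall_mem_image, Delta2_zero]

theorem strict_local_min_order_two_characterization (f : H → EReal) (hlsc : LowerSemicontinuous f) (hbot : ∀ x, f x ≠ ⊥)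
    (hproper : ∃ x, f x ≠ ⊤) (x₀ : H) (hdom : f x₀ ≠ ⊤) :
    (StrictLocalMinOrder2 f x₀ ↔
      ((0:H) ∈ proxSubdiff f x₀ ∧
        ∃ β > (0:ℝ), UniformDiniGE f x₀ 0 β (Metric.sphere (0:H) 1))) ∧
    (StrictLocalMinOrder2 f x₀ ↔
      0 < Filter.liminf (fun t : ℝ =>
        sInf ((fun h : H => ((2 / t ^ 2 : ℝ) : EReal) * (f (x₀ + t • h) - f x₀)) ''
          Metric.sphere (0:H) 1)) (nhdsWithin (0:ℝ) (Set.Ioi 0))) :=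
  strict_local_min_order_two_characterization_general f hbot x₀ hdom
end
end
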